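/- arXiv:2410.13481 — 9 statements merged into one kernel-verified Lean document; each statement's English description precedes it below -/
import Mathlib

section
/- Let ℓ ≥ 3 be an integer and let G be a simple graph with girth at least ℓ. Let x, x', y, y' be vertices of G such that xx' and yy' are edges of G. Let Q be a shortest x',y-path in G with ‖Q‖ ≤ ℓ − 2 and let Q' be a shortest x,y'-path in G with ‖Q'‖ ≤ ℓ − 2, and suppose that neither the edge xx' nor the edge yy' belongs to Q or to Q'. Then Q and Q' are vertex-disjoint. (This is Lemma 3.1 of the paper, with the hypotheses that x, x', y, y' lie on a facial cycle of a maximal embedded graph replaced by the distance bounds ‖Q‖, ‖Q'‖ ≤ ℓ − 2 that those hypotheses imply; the proof uses only the girth and these bounds.) -/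
open SimpleGraph Walk

/-- If `u ~ v` and `A` is any walk from `v` to `u` avoiding the edge `uv`, then in a graph
of girth at least `ℓ` we must have `ℓ ≤ A.length + 1`. -/
lemma stmt2_aux {V : Type*} {G : SimpleGraph V} {ℓ : ℕ}
    (hgirth : ∀ ⦃v : V⦄ (c : G.Walk v v), c.IsCycle → ℓ ≤ c.length)
    {u v : V} (h : G.Adj u v) (A : G.Walk v u) (he : s(u, v) ∉ A.edges) :
    ℓ ≤ A.length + 1 := by
  classical
  have hP : A.bypass.IsPath := A.bypass_isPath
  have heP : s(u, v) ∉ A.bypass.edges := fun hc => he (A.edges_bypass_subset hc)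
  have hcyc : (Walk.cons h A.bypass).IsCycle :=
    (Walk.cons_isCycle_iff _ _).2 ⟨hP, heP⟩
  have := hgirth _ hcyc
  have hlen : A.bypass.length ≤ A.length := A.length_bypass_le
  simp only [Walk.length_cons] at this
  omega

/-- Lemma 3.1. In a graph of girth at least `ℓ`, if `xx'` and `yy'` are
edges, `Q` is a shortest `x',y`-path of length at most `ℓ - 2`, `Q'` is a shortest
`x,y'`-path of length at most `ℓ - 2`, and neither edge `xx'` nor `yy'` lies on `Q` or on
`Q'`, then `Q` and `Q'` are vertex-disjoint. -/
theorem stmt2 {V : Type*} (G : SimpleGraph V) (ℓ : ℕ) (hℓ : 3 ≤ ℓ)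
    (hgirth : ∀ ⦃v : V⦄ (c : G.Walk v v), c.IsCycle → ℓ ≤ c.length)
    (x x' y y' : V) (hxx' : G.Adj x x') (hyy' : G.Adj y y')
    (Q : G.Walk x' y) (Q' : G.Walk x y')
    (hQ : Q.IsPath) (hQdist : Q.length = G.dist x' y) (hQlen : Q.length ≤ ℓ - 2)
    (hQ' : Q'.IsPath) (hQ'dist : Q'.length = G.dist x y') (hQ'len : Q'.length ≤ ℓ - 2)
    (h1 : s(x, x') ∉ Q.edges) (h2 : s(x, x') ∉ Q'.edges)
    (h3 : s(y, y') ∉ Q.edges) (h4 : s(y, y') ∉ Q'.edges) :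
    ∀ z : V, z ∈ Q.support → z ∉ Q'.support := by
  classical
  intro z hz hz'
  set Q₁ := Q.takeUntil z hz with hQ₁
  set Q₂ := Q.dropUntil z hz with hQ₂
  set Q₁' := Q'.takeUntil z hz' with hQ₁'
  set Q₂' := Q'.dropUntil z hz' with hQ₂'
  -- x side: walk x' → z → x avoiding edge xx'
  have hxA : ℓ ≤ (Q₁.append Q₁'.reverse).length + 1 := by
    apply stmt2_aux hgirth hxx'
    intro hc
    rw [Walk.edges_append, List.mem_append] at hc
    rcases hc with hc | hc
    · exact h1 (Q.edges_takeUntil_subset hz hc)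
    · rw [Walk.edges_reverse, List.mem_reverse] at hc
      exact h2 (Q'.edges_takeUntil_subset hz' hc)
  -- y side: walk y' → z → y avoiding edge yy'
  have hyA : ℓ ≤ (Q₂'.reverse.append Q₂).length + 1 := by
    apply stmt2_aux hgirth hyy'
    intro hc
    rw [Walk.edges_append, List.mem_append] at hc
    rcases hc with hc | hc
    · rw [Walk.edges_reverse, List.mem_reverse] at hc
      exact h4 (Q'.edges_dropUntil_subset hz' hc)
    · exact h3 (Q.edges_dropUntil_subset hz hc)
  have hQsplit : Q₁.length + Q₂.length = Q.length := by
    rw [hQ₁, hQ₂, ← Walk.length_append, Walk.take_spec]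
  have hQ'split : Q₁'.length + Q₂'.length = Q'.length := by
    rw [hQ₁', hQ₂', ← Walk.length_append, Walk.take_spec]
  rw [Walk.length_append, Walk.length_reverse] at hxA hyA
  omega
end

section
/- Let ℓ ≥ 3 be an integer and let G be a connected simple graph with girth at least ℓ. Let x_1 x_2 ⋯ x_ℓ be a path in G with ℓ vertices and let z be any vertex of G. Then there exists an index i ∈ {1, …, ℓ} such that dist_G(x_i, z) > ℓ/2 − 1, i.e., 2·dist_G(x_i, z) ≥ ℓ − 1. (This is Lemma 5.1 of the paper, with the hypothesis that the path is a segment of a facial cycle of a maximal embedded graph replaced by the girth hypothesis, which is all the proof uses.) -/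
open SimpleGraph Walk

section Aux
variable {V : Type*} {G : SimpleGraph V}

private lemma aux_getVert_mem_support {u v : V} (p : G.Walk u v) (i : ℕ) :
    p.getVert i ∈ p.support := by
  induction p generalizing i with
  | nil => cases i <;> simp [Walk.getVert]
  | cons h q ih =>
    cases i with
    | zero => simp [Walk.getVert_zero]
    | succ n =>
      rw [Walk.getVert_cons_succ]
      simp only [Walk.support_cons, List.mem_cons]
      exact Or.inr (ih n)

private lemma aux_getVert_ne {u v : V} {p : G.Walk u v} (hp : p.IsPath) :
    ∀ i j, i < j → j ≤ p.length → p.getVert i ≠ p.getVert j := by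
  induction p with
  | nil => intro i j hij hj; simp at hj; omega
  | cons h q ih =>
    intro i j hij hj
    rw [Walk.cons_isPath_iff] at hp
    cases i with
    | zero =>
      obtain ⟨j', rfl⟩ : ∃ j', j = j' + 1 := ⟨j - 1, by omega⟩
      rw [Walk.getVert_zero, Walk.getVert_cons_succ]
      intro hEq
      exact hp.2 (hEq ▸ aux_getVert_mem_support q j')
    | succ i' =>
      obtain ⟨j', rfl⟩ : ∃ j', j = j' + 1 := ⟨j - 1, by omega⟩
      rw [Walk.getVert_cons_succ, Walk.getVert_cons_succ]
      exact ih hp.1 i' j' (by omega) (by simpa [Walk.length_cons] using hj)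

private lemma aux_first_edge {u v : V} {p : G.Walk u v} (hp : p.IsPath) {e : Sym2 V}
    (he : e ∈ p.edges) (hu : u ∈ e) : e = s(u, p.getVert 1) := by
  induction p with
  | nil => simp at he
  | cons h q ih =>
    rw [Walk.cons_isPath_iff] at hp
    rw [Walk.edges_cons, List.mem_cons] at he
    rcases he with he | he
    · rw [he]
      rw [Walk.getVert_cons_succ, Walk.getVert_zero]
    · exfalso
      induction e with
      | h a b =>
        rcases Sym2.mem_iff.mp hu with rfl | rfl
        · exact hp.2 (q.fst_mem_support_of_mem_edges he)
        · exact hp.2 (q.snd_mem_support_of_mem_edges he)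

/-- If every shortest `z → u` walk uses the edge `s(u,w)`, then `w` is strictly closer. -/
private lemma aux_dist_step (hconn : G.Connected) {z u w : V} (hadj : G.Adj u w)
    (hrig : ∀ q : G.Walk z u, q.length = G.dist z u → s(u, w) ∈ q.edges) :
    G.dist z w + 1 ≤ G.dist z u := by
  classical
  obtain ⟨q, hqp, hql⟩ := hconn.exists_path_of_dist z u
  have he := hrig q hql
  have hw : w ∈ q.support := q.snd_mem_support_of_mem_edges he
  have hsplit := congrArg Walk.length (q.take_spec hw)
  rw [Walk.length_append] at hsplit
  have h1 : G.dist z w ≤ (q.takeUntil w hw).length := SimpleGraph.dist_le _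
  have h2 : 1 ≤ (q.dropUntil w hw).length := by
    by_contra hcon
    have h0 : (q.dropUntil w hw).length = 0 := by omega
    exact hadj.ne' (Walk.eq_of_length_eq_zero h0)
  omega

/-- Two short shortest paths avoiding a common edge would give a short cycle. -/
private lemma aux_no_short_pair {ℓ : ℕ}
    (hgirth : ∀ ⦃v : V⦄ (c : G.Walk v v), c.IsCycle → ℓ ≤ c.length)
    {z u w : V} (hadj : G.Adj u w)
    (hsum : G.dist z u + G.dist z w + 1 < ℓ)
    (h1 : ∃ q : G.Walk z u, q.length = G.dist z u ∧ s(u, w) ∉ q.edges)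
    (h2 : ∃ q : G.Walk z w, q.length = G.dist z w ∧ s(u, w) ∉ q.edges) : False := by
  classical
  obtain ⟨q1, hq1l, hq1e⟩ := h1
  obtain ⟨q2, hq2l, hq2e⟩ := h2
  set w0 : G.Walk u w := q1.reverse.append q2 with hw0
  have hep : s(u, w) ∉ w0.bypass.edges := by
    intro hmem
    have := w0.edges_bypass_subset hmem
    rw [hw0, Walk.edges_append, List.mem_append, Walk.edges_reverse, List.mem_reverse] at this
    exact this.elim hq1e hq2e
  have hep' : s(w, u) ∉ w0.bypass.edges := by rw [Sym2.eq_swap]; exact hep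
  have hcyc : (Walk.cons hadj.symm w0.bypass).IsCycle :=
    (Walk.cons_isCycle_iff w0.bypass hadj.symm).mpr ⟨w0.bypass_isPath, hep'⟩
  have hlen := hgirth _ hcyc
  have : (Walk.cons hadj.symm w0.bypass).length = w0.bypass.length + 1 := rfl
  have hble : w0.bypass.length ≤ w0.length := Walk.length_bypass_le w0
  have hw0l : w0.length = q1.length + q2.length := by
    rw [hw0, Walk.length_append, Walk.length_reverse]
  omega

end Aux

/-- Lemma 5.1. -/
theorem stmt4 {V : Type*} (G : SimpleGraph V) (hconn : G.Connected) (ℓ : ℕ) (hℓ : 3 ≤ ℓ)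
    (hgirth : ∀ ⦃v : V⦄ (c : G.Walk v v), c.IsCycle → ℓ ≤ c.length)
    {a b : V} (P : G.Walk a b) (hP : P.IsPath) (hPlen : P.length = ℓ - 1) (z : V) :
    ∃ x ∈ P.support, ℓ - 1 ≤ 2 * G.dist x z := by
  classical
  by_contra hcon
  push_neg at hcon
  set n := P.length with hn
  set x : ℕ → V := P.getVert with hx
  have hn2 : 2 ≤ n := by omega
  have hd : ∀ i, i ≤ n → 2 * G.dist z (x i) ≤ ℓ - 2 := by
    intro i hi
    have h := hcon (x i) (aux_getVert_mem_support P i)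
    rw [G.dist_comm] at h
    omega
  have hadj : ∀ i, i < n → G.Adj (x i) (x (i + 1)) := fun i hi => P.adj_getVert_succ hi
  -- rigidity: every shortest walk from z to u uses the edge s(u,w)
  set Rig : V → V → Prop :=
    fun u w => ∀ q : G.Walk z u, q.length = G.dist z u → s(u, w) ∈ q.edges with hRig
  have hA : ∀ i, i < n → Rig (x i) (x (i + 1)) ∨ Rig (x (i + 1)) (x i) := by
    intro i hi
    by_contra hc
    have hc1 : ¬ Rig (x i) (x (i + 1)) := fun h => hc (Or.inl h)
    have hc2 : ¬ Rig (x (i + 1)) (x i) := fun h => hc (Or.inr h)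
    simp only [hRig] at hc1 hc2
    have hc1' : ∃ q : G.Walk z (x i), q.length = G.dist z (x i) ∧ s(x i, x (i + 1)) ∉ q.edges := by
      by_contra hno
      push_neg at hno
      exact hc1 hno
    have hc2' : ∃ q : G.Walk z (x (i + 1)),
        q.length = G.dist z (x (i + 1)) ∧ s(x (i + 1), x i) ∉ q.edges := by
      by_contra hno
      push_neg at hno
      exact hc2 hno
    obtain ⟨q1, hq1, hq1e⟩ := hc1'
    obtain ⟨q2, hq2, hq2e⟩ := hc2'
    have hsum : G.dist z (x i) + G.dist z (x (i + 1)) + 1 < ℓ := by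
      have h1 := hd i (by omega)
      have h2 := hd (i + 1) (by omega)
      omega
    refine aux_no_short_pair hgirth (hadj i hi) hsum ⟨q1, hq1, hq1e⟩ ⟨q2, hq2, ?_⟩
    rw [Sym2.eq_swap] at hq2e
    exact hq2e
  have hdec : ∀ i, i < n → Rig (x i) (x (i + 1)) → G.dist z (x (i + 1)) + 1 ≤ G.dist z (x i) := by
    intro i hi hr
    exact aux_dist_step hconn (hadj i hi) hr
  have hinc : ∀ i, i < n → Rig (x (i + 1)) (x i) → G.dist z (x i) + 1 ≤ G.dist z (x (i + 1)) := by
    intro i hi hr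
    exact aux_dist_step hconn (hadj i hi).symm hr
  -- no double rigidity at an interior vertex
  have hC : ∀ j, j + 2 ≤ n → ¬(Rig (x (j + 1)) (x j) ∧ Rig (x (j + 1)) (x (j + 2))) := by
    intro j hj ⟨h1, h2⟩
    obtain ⟨q, hqp, hql⟩ := hconn.exists_path_of_dist z (x (j + 1))
    have he1 := h1 q hql
    have he2 := h2 q hql
    have hrp : q.reverse.IsPath := hqp.reverse
    have he1' : s(x (j + 1), x j) ∈ q.reverse.edges := by
      rw [Walk.edges_reverse, List.mem_reverse]; exact he1
    have he2' : s(x (j + 1), x (j + 2)) ∈ q.reverse.edges := by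
      rw [Walk.edges_reverse, List.mem_reverse]; exact he2
    have hf1 := aux_first_edge hrp he1' (Sym2.mem_mk_left _ _)
    have hf2 := aux_first_edge hrp he2' (Sym2.mem_mk_left _ _)
    have : x j = x (j + 2) := Sym2.congr_right.mp (hf1.trans hf2.symm)
    exact aux_getVert_ne hP j (j + 2) (by omega) hj this
  -- propagation of increasing rigidity
  by_cases hex : ∃ k, k < n ∧ Rig (x (k + 1)) (x k)
  · set k₀ := Nat.find hex with hk₀def
    obtain ⟨hk₀n, hk₀r⟩ := Nat.find_spec hex
    have hmin : ∀ m, m < k₀ → ¬(m < n ∧ Rig (x (m + 1)) (x m)) := fun m hm => Nat.find_min hex hm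
    have hdown : ∀ t, t ≤ k₀ → G.dist z (x t) + t ≤ G.dist z (x 0) := by
      intro t
      induction t with
      | zero => intro _; omega
      | succ t ih =>
        intro ht
        have htn : t < n := by omega
        have hnr : ¬Rig (x (t + 1)) (x t) := fun hr => hmin t (by omega) ⟨htn, hr⟩
        have hr : Rig (x t) (x (t + 1)) := (hA t htn).resolve_right hnr
        have := hdec t htn hr
        have := ih (by omega)
        omega
    have hprop : ∀ t, k₀ ≤ t → t < n → Rig (x (t + 1)) (x t) := by
      intro t ht htn
      induction t, ht using Nat.le_induction with
      | base => exact hk₀r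
      | succ t ht ih =>
        have htn' : t < n := by omega
        have hr := ih htn'
        have : ¬Rig (x (t + 1)) (x (t + 2)) := fun h2 => hC t (by omega) ⟨hr, h2⟩
        exact (hA (t + 1) htn).resolve_left this
    have hup : ∀ t, k₀ ≤ t → t ≤ n → G.dist z (x k₀) + (t - k₀) ≤ G.dist z (x t) := by
      intro t ht htn
      induction t, ht using Nat.le_induction with
      | base => omega
      | succ t ht ih =>
        have htn' : t < n := by omega
        have h1 := hinc t htn' (hprop t ht htn')
        have h2 := ih (by omega)
        omega
    have h1 : G.dist z (x k₀) + k₀ ≤ G.dist z (x 0) := hdown k₀ le_rfl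
    have h2 : G.dist z (x k₀) + (n - k₀) ≤ G.dist z (x n) := hup n hk₀n.le le_rfl
    have h3 := hd 0 (by omega)
    have h4 := hd n le_rfl
    omega
  · push_neg at hex
    have hdown : ∀ t, t ≤ n → G.dist z (x t) + t ≤ G.dist z (x 0) := by
      intro t
      induction t with
      | zero => intro _; omega
      | succ t ih =>
        intro ht
        have htn : t < n := by omega
        have hr : Rig (x t) (x (t + 1)) := (hA t htn).resolve_right (hex t htn)
        have := hdec t htn hr
        have := ih (by omega)
        omega
    have h1 := hdown n le_rfl
    have h3 := hd 0 (by omega)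
    omega
end

section
/- Let G be a simple graph and let W be a closed walk in G that traverses some edge of G an odd number of times. Then G contains a cycle whose length is at most the length of W. In particular, if G has girth at least ℓ, then every closed walk in G of length less than ℓ traverses each edge of G an even number of times. -/
/-!
Let `e = s(a, b)` occur an odd number of times in the closed walk `w`, and let `H` be the graph
on the other edges of `w`. If `b` is not reachable from `a` in `H`, colour each vertex by whether
it is reachable from `a` in `H`: along `w` the colour changes exactly when `e` is traversed, and a
closed walk changes colour an even number of times. Hence some path of `H` joins `b` to `a`, and
closing it up with `e` gives a cycle whose edges are distinct edges of `w`.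
-/

open SimpleGraph Walk

namespace SimpleGraph.Walk

variable {V : Type*} {G : SimpleGraph V}

theorem even_countP_darts_ne_iff (f : V → Bool) {u v : V} (p : G.Walk u v) :
    Even (p.darts.countP fun d => f d.fst ≠ f d.snd) ↔ f u = f v := by
  induction p with
  | nil => simp
  | @cons u x v h p ih =>
    rw [darts_cons, List.countP_cons, Nat.even_add, ih]
    cases f u <;> cases f x <;> cases f v <;> simp

theorem even_countP_darts_ne (f : V → Bool) {u : V} (w : G.Walk u u) :
    Even (w.darts.countP fun d => f d.fst ≠ f d.snd) :=
  (even_countP_darts_ne_iff f w).2 rfl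

theorem length_le_of_isTrail_of_edges_subset {u v x y : V} {c : G.Walk u v} (hc : c.IsTrail)
    {w : G.Walk x y} (h : c.edges ⊆ w.edges) : c.length ≤ w.length := by
  simpa only [length_edges] using (hc.edges_nodup.subperm h).length_le

def edgesWithout {u v : V} (w : G.Walk u v) (e : Sym2 V) : SimpleGraph V :=
  fromEdgeSet ({x | x ∈ w.edges} \ {e})

theorem edgeSet_edgesWithout {u v : V} (w : G.Walk u v) (e : Sym2 V) :
    (w.edgesWithout e).edgeSet = ({x | x ∈ w.edges} \ {e}) \ {x | x.IsDiag} :=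
  edgeSet_fromEdgeSet _

theorem edgesWithout_le {u v : V} (w : G.Walk u v) (e : Sym2 V) : w.edgesWithout e ≤ G :=
  fun _ _ h => w.edges_subset_edgeSet ((fromEdgeSet_adj _).1 h).1.1

theorem reachable_edgesWithout_of_odd_count [DecidableEq V] {u a b : V} (w : G.Walk u u)
    (hodd : Odd (w.edges.count s(a, b))) : (w.edgesWithout s(a, b)).Reachable a b := by
  classical
  by_contra hab
  set f : V → Bool := fun x => (w.edgesWithout s(a, b)).Reachable a x
  have hcross : ∀ d ∈ w.darts, f d.fst ≠ f d.snd ↔ d.edge = s(a, b) := by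
    intro d hd
    by_cases he : d.edge = s(a, b)
    · rcases Sym2.eq_iff.1 he with ⟨h₁, h₂⟩ | ⟨h₁, h₂⟩ <;>
        simp [f, he, h₁, h₂, hab]
    · have hadj : (w.edgesWithout s(a, b)).Adj d.fst d.snd :=
        (fromEdgeSet_adj _).2 ⟨⟨List.mem_map_of_mem (f := Dart.edge) hd, he⟩, d.adj.ne⟩
      simp only [f, he, iff_false, not_not]
      exact decide_eq_decide.2
        ⟨fun h => h.trans hadj.reachable, fun h => h.trans hadj.symm.reachable⟩
  have hcount : (w.darts.countP fun d => f d.fst ≠ f d.snd) = w.edges.count s(a, b) := by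
    rw [edges, List.count, List.countP_map]
    exact List.countP_congr fun d hd => by simpa using hcross d hd
  exact Nat.not_even_iff_odd.2 hodd (hcount ▸ even_countP_darts_ne f w)

theorem exists_isCycle_edges_subset_of_odd_count [DecidableEq V] {u : V} (w : G.Walk u u)
    {e : Sym2 V} (hodd : Odd (w.edges.count e)) :
    ∃ (v : V) (c : G.Walk v v), c.IsCycle ∧ c.edges ⊆ w.edges := by
  obtain ⟨a, b⟩ := e
  have hmem : s(a, b) ∈ w.edges := List.count_pos_iff.1 hodd.pos
  obtain ⟨p, hp⟩ := (reachable_edgesWithout_of_odd_count w hodd).symm.exists_isPath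
  have hpH : ∀ x ∈ p.edges, x ∈ w.edges ∧ x ≠ s(a, b) := fun x hx =>
    (edgeSet_edgesWithout w _ ▸ p.edges_subset_edgeSet hx).1
  refine ⟨a, cons (w.adj_of_mem_edges hmem) (p.mapLe (w.edgesWithout_le _)), ?_, ?_⟩
  · rw [cons_isCycle_iff, isPath_mapLe, edges_mapLe_eq_edges]
    exact ⟨hp, fun h => (hpH _ h).2 rfl⟩
  · rw [edges_cons, edges_mapLe_eq_edges]
    exact List.cons_subset.2 ⟨hmem, fun x hx => (hpH x hx).1⟩

theorem exists_isCycle_length_le_of_odd_count [DecidableEq V] {u : V} (w : G.Walk u u)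
    {e : Sym2 V} (hodd : Odd (w.edges.count e)) :
    ∃ (v : V) (c : G.Walk v v), c.IsCycle ∧ c.length ≤ w.length :=
  let ⟨v, c, hc, hsub⟩ := w.exists_isCycle_edges_subset_of_odd_count hodd
  ⟨v, c, hc, length_le_of_isTrail_of_edges_subset hc.isTrail hsub⟩

end SimpleGraph.Walk

/-- If a closed walk traverses some edge an odd number of times, then the
graph contains a cycle of length at most the length of the walk. In particular, in a graph
of girth at least `ℓ`, every closed walk of length less than `ℓ` traverses each edge an
even number of times. -/
theorem stmt5 {V : Type*} [DecidableEq V] (G : SimpleGraph V) :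
    (∀ (u : V) (w : G.Walk u u) (e : Sym2 V), Odd (w.edges.count e) →
      ∃ (v : V) (c : G.Walk v v), c.IsCycle ∧ c.length ≤ w.length) ∧
    (∀ ℓ : ℕ, (∀ ⦃v : V⦄ (c : G.Walk v v), c.IsCycle → ℓ ≤ c.length) →
      ∀ (u : V) (w : G.Walk u u), w.length < ℓ →
        ∀ e : Sym2 V, Even (w.edges.count e)) := by
  refine ⟨fun u w e => w.exists_isCycle_length_le_of_odd_count, fun ℓ hgirth u w hw e => ?_⟩
  by_contra heven
  obtain ⟨v, c, hc, hlen⟩ :=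
    w.exists_isCycle_length_le_of_odd_count (Nat.not_even_iff_odd.1 heven)
  have := hgirth c hc
  omega
end

section
/- Let ℓ ≥ 3 be an integer and let G be a simple graph with girth at least ℓ. Let x and y be adjacent vertices of G and let z be a vertex of G reachable from x such that dist_G(x, z) + dist_G(y, z) ≤ ℓ − 2. Then |dist_G(x, z) − dist_G(y, z)| = 1. (This is the key step in the proof of Lemma 5.1 of the paper: for consecutive vertices of a path, the distances to z cannot be equal, so they differ by exactly one.) -/
/-!
Adjacency already forces the two distances to differ by at most one. If they were equal to `d`,
the edge `yx` followed by geodesics `x ⟶ z ⟶ y` would be a closed walk of odd length `2d + 1`,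
and every odd closed walk contains a cycle no longer than itself; since `2d + 1 < ℓ`, this
contradicts the girth bound.
-/

open SimpleGraph

namespace SimpleGraph.Walk

variable {V : Type*} {G : SimpleGraph V}

/-- `c` is the closed subwalk between two visits of a repeated vertex and `q` is what remains. -/
lemma exists_loop_of_not_isPath {u v : V} (p : G.Walk u v) (hp : ¬p.IsPath) :
    ∃ (w : V) (c : G.Walk w w) (q : G.Walk u v), 0 < c.length ∧ c.length + q.length = p.length := by
  classical
  induction p with
  | nil => exact absurd IsPath.nil hp
  | @cons u a v h p ih =>
    by_cases hu : u ∈ p.support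
    · refine ⟨u, cons h (p.takeUntil u hu), p.dropUntil u hu, by simp, ?_⟩
      have hsplit := congrArg length (p.take_spec hu)
      rw [length_append] at hsplit
      simp only [length_cons]
      omega
    · obtain ⟨w, c, q, hc, hlen⟩ := ih fun hp' ↦ hp ((cons_isPath_iff h p).2 ⟨hp', hu⟩)
      exact ⟨w, c, cons h q, hc, by simp only [length_cons]; omega⟩

lemma exists_isCycle_length_le_of_odd {v : V} (c : G.Walk v v) (hodd : Odd c.length) :
    ∃ (u : V) (d : G.Walk u u), d.IsCycle ∧ d.length ≤ c.length := by
  induction hn : c.length using Nat.strong_induction_on generalizing v with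
  | _ n ih =>
  cases c with
  | nil => simp at hodd
  | @cons _ w _ h p =>
    subst hn
    by_cases hp : p.IsPath
    · by_cases hedge : s(v, w) ∈ p.edges
      · have hlen : p.length = 1 := hp.length_eq_one_of_mem_edges (Sym2.eq_swap ▸ hedge)
        simp [hlen, Nat.odd_iff] at hodd
      · exact ⟨v, cons h p, (cons_isCycle_iff p h).2 ⟨hp, hedge⟩, le_rfl⟩
    · obtain ⟨u, q, r, hq, hlen⟩ := exists_loop_of_not_isPath p hp
      simp only [length_cons] at ih hodd ⊢
      -- one of the two closed walks `q` and `cons h r` has odd length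
      by_cases hqodd : Odd q.length
      · obtain ⟨u', d, hd, hdlen⟩ := ih _ (by omega) q hqodd rfl
        exact ⟨u', d, hd, by omega⟩
      · have hrodd : Odd (cons h r).length := by
          rw [Nat.odd_iff] at hodd hqodd ⊢
          simp only [length_cons]
          omega
        obtain ⟨u', d, hd, hdlen⟩ := ih _ (by simp only [length_cons]; omega) _ hrodd rfl
        exact ⟨u', d, hd, by simp only [length_cons] at hdlen; omega⟩

end SimpleGraph.Walk

namespace SimpleGraph

variable {V : Type*} {G : SimpleGraph V}

lemma exists_isCycle_length_le_of_adj_of_dist_eq {x y z : V} (hxy : G.Adj x y)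
    (hreach : G.Reachable x z) (heq : G.dist x z = G.dist y z) :
    ∃ (u : V) (c : G.Walk u u), c.IsCycle ∧ c.length ≤ 2 * G.dist x z + 1 := by
  obtain ⟨p, hp⟩ := hreach.exists_walk_length_eq_dist
  obtain ⟨q, hq⟩ := (hxy.symm.reachable.trans hreach).exists_walk_length_eq_dist
  let loop : G.Walk y y := Walk.cons hxy.symm (p.append q.reverse)
  have hloop : loop.length = 2 * G.dist x z + 1 := by
    simp only [loop, Walk.length_cons, Walk.length_append, Walk.length_reverse, hp, hq, ← heq]
    ring
  obtain ⟨u, c, hc, hclen⟩ := loop.exists_isCycle_length_le_of_odd (by rw [hloop]; exact odd_two_mul_add_one _)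
  exact ⟨u, c, hc, hloop ▸ hclen⟩

end SimpleGraph

theorem stmt6_general {V : Type*} (G : SimpleGraph V) (ℓ : ℕ)
    (hgirth : ∀ ⦃v : V⦄ (c : G.Walk v v), c.IsCycle → ℓ ≤ c.length)
    (x y z : V) (hxy : G.Adj x y) (hreach : G.Reachable x z)
    (hsum : G.dist x z + G.dist y z ≤ ℓ - 2) :
    G.dist x z = G.dist y z + 1 ∨ G.dist y z = G.dist x z + 1 := by
  have hne : G.dist x z ≠ G.dist y z := by
    intro heq
    obtain ⟨u, c, hc, hclen⟩ := exists_isCycle_length_le_of_adj_of_dist_eq hxy hreach heq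
    have := hgirth c hc
    have := hc.three_le_length
    omega
  have hdiff := hxy.diff_dist_adj (u := z)
  rw [dist_comm (u := z), dist_comm (u := z)] at hdiff
  omega

/-- In a graph of girth at least `ℓ ≥ 3`, if `x` and `y` are adjacent,
`z` is reachable from `x`, and `dist(x,z) + dist(y,z) ≤ ℓ - 2`, then the two distances
differ by exactly one. -/
theorem stmt6 {V : Type*} (G : SimpleGraph V) (ℓ : ℕ) (hℓ : 3 ≤ ℓ)
    (hgirth : ∀ ⦃v : V⦄ (c : G.Walk v v), c.IsCycle → ℓ ≤ c.length)
    (x y z : V) (hxy : G.Adj x y) (hreach : G.Reachable x z)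
    (hsum : G.dist x z + G.dist y z ≤ ℓ - 2) :
    G.dist x z = G.dist y z + 1 ∨ G.dist y z = G.dist x z + 1 :=
  stmt6_general G ℓ hgirth x y z hxy hreach hsum
end

section
/- Let G be a simple graph, C a cycle in G, and P a path in G both of whose endpoints lie on C. Then P can be written as a concatenation of consecutive subpaths, each of which is either a segment of C or an ear of C; in particular, P is an edge-disjoint union of segments of the cycle C and ears of C. -/
open SimpleGraph Walk

/-- A segment of a cycle `C` (given as a closed walk) is a path contained in `C`. -/
def IsSegment {V : Type*} {G : SimpleGraph V} {v a b : V}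
    (C : G.Walk v v) (P : G.Walk a b) : Prop :=
  P.IsPath ∧ (∀ u ∈ P.support, u ∈ C.support) ∧ (∀ e ∈ P.edges, e ∈ C.edges)

/-- An ear of a cycle `C`: a path with at least one edge, whose endpoints lie on `C`, and
none of whose other vertices or edges belongs to `C`. -/
def IsEar {V : Type*} {G : SimpleGraph V} {v a b : V}
    (C : G.Walk v v) (P : G.Walk a b) : Prop :=
  P.IsPath ∧ 1 ≤ P.length ∧ a ∈ C.support ∧ b ∈ C.support ∧
    (∀ u ∈ P.support, u ≠ a → u ≠ b → u ∉ C.support) ∧ (∀ e ∈ P.edges, e ∉ C.edges)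

/-- A walk is a concatenation of consecutive subwalks, each of which is either a segment
of `C` or an ear of `C`. -/
inductive IsSegEarConcat {V : Type*} {G : SimpleGraph V} {v : V} (C : G.Walk v v) :
    ∀ {a b : V}, G.Walk a b → Prop
  | nil {a : V} : IsSegEarConcat C (Walk.nil : G.Walk a a)
  | cons {a m b : V} (P1 : G.Walk a m) (P2 : G.Walk m b) :
      (IsSegment C P1 ∨ IsEar C P1) → IsSegEarConcat C P2 →
        IsSegEarConcat C (P1.append P2)


lemma splitFirst {V : Type*} {G : SimpleGraph V} {v c b : V} (C : G.Walk v v)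
    (q : G.Walk c b) (hb : b ∈ C.support) :
    ∃ (m : V) (q1 : G.Walk c m) (q2 : G.Walk m b),
      q = q1.append q2 ∧ m ∈ C.support ∧ ∀ u ∈ q1.support, u ≠ m → u ∉ C.support := by
  induction q with
  | nil => exact ⟨_, .nil, .nil, rfl, hb, by simp⟩
  | @cons u w x h q ih =>
    by_cases hu : u ∈ C.support
    · exact ⟨u, .nil, .cons h q, rfl, hu, by simp⟩
    · obtain ⟨m, q1, q2, heq, hm, hav⟩ := ih hb
      refine ⟨m, .cons h q1, q2, by rw [heq]; rfl, hm, ?_⟩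
      intro z hz hzm
      rcases List.mem_cons.mp hz with rfl | hz
      · exact hu
      · exact hav z hz hzm

lemma aux_stmt8 {V : Type*} {G : SimpleGraph V} {v : V} (C : G.Walk v v) :
    ∀ (n : ℕ) {a b : V} (P : G.Walk a b), P.length ≤ n → P.IsPath →
      a ∈ C.support → b ∈ C.support → IsSegEarConcat C P := by
  intro n
  induction n with
  | zero =>
    intro a b P hlen hP ha hb
    cases P with
    | nil => exact .nil
    | cons h q => simp at hlen
  | succ n ih =>
    intro a b P hlen hP ha hb
    cases P with
    | nil => exact .nil
    | @cons a c b h q =>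
      by_cases he : s(a, c) ∈ C.edges
      · have hc : c ∈ C.support := Walk.snd_mem_support_of_mem_edges C he
        have hseg : IsSegment C (Walk.cons h (Walk.nil : G.Walk c c)) := by
          refine ⟨by simp [h.ne], ?_, by simp [he]⟩
          intro u hu
          rcases (by simpa using hu : u = a ∨ u = c) with rfl | rfl
          · exact ha
          · exact hc
        have : IsSegEarConcat C ((Walk.cons h Walk.nil).append q) :=
          .cons _ _ (.inl hseg) (ih q (by simpa using hlen) hP.of_cons hc hb)
        simpa using this
      · obtain ⟨m, q1, q2, heq, hm, hav⟩ := splitFirst C q (by simpa using hb)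
        subst heq
        have hP1 : (Walk.cons h q1).IsPath := by
          have : ((Walk.cons h q1).append q2).IsPath := hP
          exact this.of_append_left
        have hear : IsEar C (Walk.cons h q1) := by
          refine ⟨hP1, by simp, ha, hm, ?_, ?_⟩
          · intro u hu hua hum
            rcases List.mem_cons.mp (by simpa using hu) with rfl | hu'
            · exact absurd rfl hua
            · exact hav u hu' hum
          · intro e hee heC
            rcases List.mem_cons.mp (by simpa using hee) with rfl | he'
            · exact he heC
            · -- e ∈ q1.edges and e ∈ C.edges: derive contradiction
              have hG : e ∈ G.edgeSet := Walk.edges_subset_edgeSet q1 he'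
              induction e with
              | h x y =>
                have hxy : x ≠ y := hG.ne
                have hx1 : x ∈ q1.support := Walk.fst_mem_support_of_mem_edges q1 he'
                have hy1 : y ∈ q1.support := Walk.snd_mem_support_of_mem_edges q1 he'
                have hxC : x ∈ C.support := Walk.fst_mem_support_of_mem_edges C heC
                have hyC : y ∈ C.support := Walk.snd_mem_support_of_mem_edges C heC
                by_cases hx : x = m
                · exact hav y hy1 (by rw [← hx]; exact hxy.symm) hyC
                · exact hav x hx1 hx hxC
        have hlen2 : q2.length ≤ n := by
          have := hlen
          simp only [Walk.length_cons, Walk.length_append] at this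
          omega
        exact .cons _ _ (.inr hear)
          (ih q2 hlen2 (hP.of_cons.of_append_right) hm hb)

/-- Every path whose endpoints lie on a cycle `C` is a concatenation of
consecutive subpaths, each of which is a segment of `C` or an ear of `C`. -/
theorem stmt8 {V : Type*} (G : SimpleGraph V) {v a b : V} (C : G.Walk v v)
    (hC : C.IsCycle) (P : G.Walk a b) (hP : P.IsPath)
    (ha : a ∈ C.support) (hb : b ∈ C.support) :
    IsSegEarConcat C P :=
  aux_stmt8 C P.length P le_rfl hP ha hb
end

section
/- Let ℓ ≥ 7 be an integer. The graph W(ℓ) contains no cycle of length less than ℓ, i.e., W(ℓ) has girth at least ℓ. -/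
/-!
On a cycle every vertex has exactly two cycle-neighbours. If a cycle of `W(ℓ)` avoids the
center `c`, it also avoids every `m_k` (whose only neighbours are `c` and `a_k`), so each rim
vertex on it has both rim neighbours on it: the cycle is the whole rim, of length `3ℓ - 11 ≥ ℓ`.
If it passes through `c`, it uses exactly two paths `c m_i a_i` and `c m_j a_j` and misses the
third midpoint, so from `a_i` it has to follow the rim in one direction until it meets `a_j`,
at least `ℓ - 4` steps later. Together with `c, m_i, m_j` this gives `ℓ` distinct vertices.
-/

open SimpleGraph

/-- The subdivided wheel `W(ℓ)`: a cycle `v_0 ⋯ v_{3ℓ-12}` of length `3ℓ-11` (the vertices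
`Sum.inl i`), together with a center `c = Sum.inr 0` and three midpoints
`m_1, m_2, m_3 = Sum.inr 1, 2, 3`, where `c` is adjacent to each `m_k`, and `m_1, m_2, m_3`
are adjacent to `v_0`, `v_{ℓ-4}`, `v_{2ℓ-8}` respectively. -/
def WGraph (ℓ : ℕ) : SimpleGraph (Fin (3 * ℓ - 11) ⊕ Fin 4) :=
  SimpleGraph.fromRel (fun u v =>
    (∃ i j : Fin (3 * ℓ - 11), u = .inl i ∧ v = .inl j ∧
      ((i : ℕ) + 1) % (3 * ℓ - 11) = (j : ℕ)) ∨
    (∃ k : Fin 4, (k : ℕ) ≠ 0 ∧ u = .inr 0 ∧ v = .inr k) ∨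
    (∃ i : Fin (3 * ℓ - 11), (i : ℕ) = 0 ∧ u = .inr 1 ∧ v = .inl i) ∨
    (∃ i : Fin (3 * ℓ - 11), (i : ℕ) = ℓ - 4 ∧ u = .inr 2 ∧ v = .inl i) ∨
    (∃ i : Fin (3 * ℓ - 11), (i : ℕ) = 2 * ℓ - 8 ∧ u = .inr 3 ∧ v = .inl i))

namespace SimpleGraph.Walk.IsCycle

variable {V : Type*} {G : SimpleGraph V} {u v w a b : V} {p : G.Walk u u}

theorem exists_toSubgraph_adj_ne (hp : p.IsCycle) (hv : v ∈ p.support) (a : V) :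
    ∃ w, w ≠ a ∧ p.toSubgraph.Adj v w := by
  obtain ⟨w, hw, hwa⟩ := Set.exists_ne_of_one_lt_ncard
    (by rw [hp.ncard_neighborSet_toSubgraph_eq_two hv]; norm_num) a
  exact ⟨w, hwa, hw⟩

theorem toSubgraph_adj_of_forall_eq_or_eq (hp : p.IsCycle) (hv : v ∈ p.support)
    (h : ∀ w, p.toSubgraph.Adj v w → w = a ∨ w = b) :
    p.toSubgraph.Adj v a ∧ p.toSubgraph.Adj v b := by
  obtain ⟨w, hwa, hw⟩ := hp.exists_toSubgraph_adj_ne hv a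
  obtain ⟨w', hwb, hw'⟩ := hp.exists_toSubgraph_adj_ne hv b
  exact ⟨(h w' hw').resolve_right hwb ▸ hw', (h w hw).resolve_left hwa ▸ hw⟩

theorem eq_or_eq_of_toSubgraph_adj (hp : p.IsCycle) (hv : v ∈ p.support)
    (ha : p.toSubgraph.Adj v a) (hb : p.toSubgraph.Adj v b) (hab : a ≠ b)
    (hw : p.toSubgraph.Adj v w) : w = a ∨ w = b := by
  have htwo := hp.ncard_neighborSet_toSubgraph_eq_two hv
  have hsub : {a, b} ⊆ p.toSubgraph.neighborSet v := by
    rintro x (rfl | rfl) <;> assumption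
  have heq := Set.eq_of_subset_of_ncard_le hsub (by rw [htwo, Set.ncard_pair hab])
    (Set.finite_of_ncard_pos (by omega))
  have hw' : w ∈ p.toSubgraph.neighborSet v := hw
  rwa [← heq] at hw'

theorem card_le_length [DecidableEq V] (hp : p.IsCycle) {s : Finset V}
    (hs : ∀ v ∈ s, v ∈ p.support) : s.card ≤ p.length := by
  have hsub : s ⊆ p.support.tail.toFinset := by
    intro v hv
    rw [List.mem_toFinset]
    rcases p.mem_support_iff.mp (hs v hv) with rfl | h
    · exact end_mem_tail_support hp.not_nil
    · exact h
  calc s.card ≤ p.support.tail.toFinset.card := Finset.card_le_card hsub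
    _ = p.length := by
      rw [List.toFinset_card_of_nodup hp.support_nodup, List.length_tail, length_support]
      rfl

end SimpleGraph.Walk.IsCycle

namespace Fin

open Fin.CommRing

variable {n : ℕ} [NeZero n] {s : Fin n}

theorem injOn_add_natCast_mul (x : Fin n) (hs : s = 1 ∨ s = -1) :
    Set.InjOn (fun t : ℕ => x + t * s) (Set.Iio n) := by
  intro t ht t' ht' h
  have hcast : (t : Fin n) = t' := by
    rcases hs with rfl | rfl <;> simpa using h
  simpa [Nat.mod_eq_of_lt (Set.mem_Iio.mp ht), Nat.mod_eq_of_lt (Set.mem_Iio.mp ht')]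
    using congrArg Fin.val hcast

theorem add_natCast_mul_ne {x y : Fin n} (hs : s = 1 ∨ s = -1) {t : ℕ}
    (ht : t < (y - x : Fin n)) (ht' : t < (x - y : Fin n)) : x + t * s ≠ y := by
  have htn : t < n := ht.trans (y - x).isLt
  rintro rfl
  rcases hs with rfl | rfl
  · simp [Nat.mod_eq_of_lt htn] at ht
  · simp [Nat.mod_eq_of_lt htn] at ht'

end Fin

namespace WGraph

open Fin.CommRing

variable {ℓ : ℕ}

theorem adj_center {v : Fin (3 * ℓ - 11) ⊕ Fin 4} (h : (WGraph ℓ).Adj (.inr 0) v) :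
    ∃ k, k ≠ 0 ∧ v = .inr k := by
  simp only [WGraph, fromRel_adj] at h
  aesop

variable [NeZero (3 * ℓ - 11)]

/-- The attachment vertex `a_k = v_{(k-1)(ℓ-4)}` of `m_k`; meaningless for `k = 0`. -/
def attach (ℓ : ℕ) [NeZero (3 * ℓ - 11)] (k : Fin 4) : Fin (3 * ℓ - 11) :=
  (((k : ℕ) - 1) * (ℓ - 4) : ℕ)

theorem val_attach (k : Fin 4) : (attach ℓ k : ℕ) = ((k : ℕ) - 1) * (ℓ - 4) := by
  have hℓ := NeZero.ne (3 * ℓ - 11)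
  have : ((k : ℕ) - 1) * (ℓ - 4) ≤ 2 * (ℓ - 4) := Nat.mul_le_mul_right _ (by omega)
  rw [attach, Fin.val_natCast, Nat.mod_eq_of_lt (by omega)]

theorem adj_spoke {k : Fin 4} {v : Fin (3 * ℓ - 11) ⊕ Fin 4} (hk : k ≠ 0)
    (h : (WGraph ℓ).Adj (.inr k) v) : v = .inr 0 ∨ v = .inl (attach ℓ k) := by
  simp only [WGraph, fromRel_adj] at h
  obtain ⟨-, h | h⟩ := h <;>
    rcases h with ⟨a, b, h1, h2, h3⟩ | ⟨k', hk', h1, h2⟩ | ⟨a, ha, h1, h2⟩ | ⟨a, ha, h1, h2⟩ |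
      ⟨a, ha, h1, h2⟩ <;> cases h1 <;> cases h2
  all_goals first
    | exact absurd rfl hk
    | exact .inl rfl
    | exact .inr (congrArg _ (Fin.ext (by rw [val_attach, ha]; simp <;> omega)))

theorem adj_rim {i : Fin (3 * ℓ - 11)} {v : Fin (3 * ℓ - 11) ⊕ Fin 4}
    (h : (WGraph ℓ).Adj (.inl i) v) :
    v = .inl (i + 1) ∨ v = .inl (i - 1) ∨ ∃ k, k ≠ 0 ∧ attach ℓ k = i ∧ v = .inr k := by
  simp only [WGraph, fromRel_adj] at h
  obtain ⟨-, h | h⟩ := h <;>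
    rcases h with ⟨a, b, h1, h2, h3⟩ | ⟨k', hk', h1, h2⟩ | ⟨a, ha, h1, h2⟩ | ⟨a, ha, h1, h2⟩ |
      ⟨a, ha, h1, h2⟩ <;> cases h1 <;> cases h2
  · exact .inl (congrArg _ (Fin.ext (by rw [← h3, Fin.val_add, Fin.val_one', Nat.add_mod_mod])))
  · exact .inr (.inl (congrArg _ (eq_sub_of_add_eq
      (Fin.ext (by rw [← h3, Fin.val_add, Fin.val_one', Nat.add_mod_mod])))))
  all_goals exact .inr (.inr ⟨_, by decide, Fin.ext (by rw [val_attach, ha]; simp <;> omega), rfl⟩)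

theorem le_val_attach_sub_attach {i j : Fin 4} (hi : i ≠ 0) (hj : j ≠ 0) (hij : i ≠ j) :
    ℓ - 4 ≤ (attach ℓ j - attach ℓ i : Fin (3 * ℓ - 11)) := by
  have hℓ := NeZero.ne (3 * ℓ - 11)
  have hvi := val_attach (ℓ := ℓ) i
  have hvj := val_attach (ℓ := ℓ) j
  rcases le_or_gt (attach ℓ i) (attach ℓ j) with h | h
  · rw [Fin.sub_val_of_le h, hvi, hvj]
    rw [Fin.le_def, hvi, hvj] at h
    fin_cases i <;> fin_cases j <;> simp at hi hj hij h ⊢ <;> omega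
  · rw [Fin.coe_sub_iff_lt.mpr h, hvi, hvj]
    rw [Fin.lt_def, hvi, hvj] at h
    fin_cases i <;> fin_cases j <;> simp at hi hj hij h ⊢ <;> omega

theorem attach_ne_attach (hℓ : 5 ≤ ℓ) {i j : Fin 4} (hi : i ≠ 0) (hj : j ≠ 0) (hij : i ≠ j) :
    attach ℓ i ≠ attach ℓ j := by
  intro h
  have := le_val_attach_sub_attach (ℓ := ℓ) hi hj hij
  rw [h, sub_self, Fin.val_zero] at this
  omega

section Cycle

variable {u : Fin (3 * ℓ - 11) ⊕ Fin 4} {p : (WGraph ℓ).Walk u u}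

theorem toSubgraph_adj_of_spoke_mem (hp : p.IsCycle) {k : Fin 4} (hk : k ≠ 0)
    (h : .inr k ∈ p.support) :
    p.toSubgraph.Adj (.inr k) (.inr 0) ∧ p.toSubgraph.Adj (.inr k) (.inl (attach ℓ k)) :=
  hp.toSubgraph_adj_of_forall_eq_or_eq h fun _ hw => adj_spoke hk hw.adj_sub

theorem rim_succ_mem_and_pred_mem (hp : p.IsCycle) {y : Fin (3 * ℓ - 11)}
    (hy : .inl y ∈ p.support) (h : ∀ k, k ≠ 0 → attach ℓ k = y → .inr k ∉ p.support) :
    .inl (y + 1) ∈ p.support ∧ .inl (y - 1) ∈ p.support := by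
  have := hp.toSubgraph_adj_of_forall_eq_or_eq hy fun w hw => by
    rcases adj_rim hw.adj_sub with hw' | hw' | ⟨k, hk, hky, rfl⟩
    · exact .inl hw'
    · exact .inr hw'
    · exact absurd (Walk.mem_support_of_adj_toSubgraph hw.symm) (h k hk hky)
  exact ⟨Walk.mem_support_of_adj_toSubgraph this.1.symm,
    Walk.mem_support_of_adj_toSubgraph this.2.symm⟩

theorem exists_rim_step (hp : p.IsCycle) {y : Fin (3 * ℓ - 11)} {i : Fin 4}
    (hy : .inl y ∈ p.support)
    (h : ∀ k, k ≠ 0 → attach ℓ k = y → .inr k ∈ p.support → k = i) :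
    ∃ s : Fin (3 * ℓ - 11), (s = 1 ∨ s = -1) ∧ .inl (y + s) ∈ p.support := by
  obtain ⟨w, hwi, hw⟩ := hp.exists_toSubgraph_adj_ne hy (.inr i)
  have hmem := Walk.mem_support_of_adj_toSubgraph hw.symm
  rcases adj_rim hw.adj_sub with rfl | rfl | ⟨k, hk, hky, rfl⟩
  · exact ⟨1, .inl rfl, hmem⟩
  · exact ⟨-1, .inr rfl, by simpa [sub_eq_add_neg] using hmem⟩
  · exact absurd (congrArg Sum.inr (h k hk hky hmem)) hwi

theorem le_length_of_center_not_mem (hp : p.IsCycle) (hc : .inr 0 ∉ p.support) :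
    3 * ℓ - 11 ≤ p.length := by
  have hspoke : ∀ k, .inr k ∉ p.support := by
    intro k hk
    by_cases hk0 : k = 0
    · exact hc (hk0 ▸ hk)
    · exact hc (Walk.mem_support_of_adj_toSubgraph (toSubgraph_adj_of_spoke_mem hp hk0 hk).1.symm)
  obtain ⟨x, hx⟩ : ∃ x, .inl x ∈ p.support := by
    cases u with
    | inl x => exact ⟨x, p.start_mem_support⟩
    | inr k => exact absurd p.start_mem_support (hspoke k)
  have hrun : ∀ t : ℕ, .inl (x + t) ∈ p.support := by
    intro t
    induction t with
    | zero => simpa using hx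
    | succ t ih =>
      simpa [add_assoc] using (rim_succ_mem_and_pred_mem hp ih fun k _ _ => hspoke k).1
  have hall : ∀ y, .inl y ∈ p.support := fun y => by simpa using hrun (y - x : Fin _)
  simpa using hp.card_le_length (s := Finset.univ.map .inl) (by simpa using hall)

theorem exists_two_spokes_of_center_mem (hp : p.IsCycle) (hc : .inr 0 ∈ p.support) :
    ∃ i j : Fin 4, i ≠ 0 ∧ j ≠ 0 ∧ i ≠ j ∧ .inr i ∈ p.support ∧ .inr j ∈ p.support ∧
      ∀ k, k ≠ 0 → .inr k ∈ p.support → k = i ∨ k = j := by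
  obtain ⟨w, -, hw⟩ := hp.exists_toSubgraph_adj_ne hc (.inr 0)
  obtain ⟨w', hw'w, hw'⟩ := hp.exists_toSubgraph_adj_ne hc w
  obtain ⟨i, hi, rfl⟩ := adj_center hw.adj_sub
  obtain ⟨j, hj, rfl⟩ := adj_center hw'.adj_sub
  refine ⟨i, j, hi, hj, fun h => hw'w (h ▸ rfl), Walk.mem_support_of_adj_toSubgraph hw.symm,
    Walk.mem_support_of_adj_toSubgraph hw'.symm, fun k hk hmk => ?_⟩
  simpa using hp.eq_or_eq_of_toSubgraph_adj hc hw hw' (Ne.symm hw'w)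
    (toSubgraph_adj_of_spoke_mem hp hk hmk).1.symm

theorem add_natCast_mul_mem_of_spokes (hp : p.IsCycle) {i j : Fin 4}
    (hi : i ≠ 0) (hj : j ≠ 0) (hij : i ≠ j)
    (hspoke : ∀ k, k ≠ 0 → .inr k ∈ p.support → k = i ∨ k = j) {s : Fin (3 * ℓ - 11)}
    (hs : s = 1 ∨ s = -1) (hx : .inl (attach ℓ i) ∈ p.support)
    (hxs : .inl (attach ℓ i + s) ∈ p.support) :
    ∀ t ≤ ℓ - 4, .inl (attach ℓ i + t * s) ∈ p.support := by
  have hxy := le_val_attach_sub_attach (ℓ := ℓ) hi hj hij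
  have hyx := le_val_attach_sub_attach (ℓ := ℓ) hj hi hij.symm
  set x := attach ℓ i
  set y := attach ℓ j
  intro t ht
  induction t with
  | zero => simpa using hx
  | succ t ih =>
    rcases Nat.eq_zero_or_pos t with rfl | htpos
    · simpa using hxs
    set z := x + t * s
    have hzx : z ≠ x := by
      intro h
      have := Fin.injOn_add_natCast_mul x hs (x₁ := t) (x₂ := 0) (by simp; omega)
        (by simp; omega) (by simp only [Nat.cast_zero, zero_mul, add_zero]; exact h)
      omega
    have hzy : z ≠ y := Fin.add_natCast_mul_ne hs (by omega) (by omega)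
    have hstep := rim_succ_mem_and_pred_mem hp (ih (by omega)) fun k hk hkz hmk => by
      rcases hspoke k hk hmk with rfl | rfl
      exacts [hzx hkz.symm, hzy hkz.symm]
    have : x + ((t + 1 : ℕ) : Fin (3 * ℓ - 11)) * s = z + s := by push_cast; ring
    rw [this]
    rcases hs with rfl | rfl
    · exact hstep.1
    · simpa [sub_eq_add_neg] using hstep.2

theorem le_length_of_center_mem (hℓ : 5 ≤ ℓ) (hp : p.IsCycle) (hc : .inr 0 ∈ p.support) :
    ℓ ≤ p.length := by
  obtain ⟨i, j, hi, hj, hij, hmi, hmj, hspoke⟩ := exists_two_spokes_of_center_mem hp hc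
  have hx : .inl (attach ℓ i) ∈ p.support :=
    Walk.mem_support_of_adj_toSubgraph (toSubgraph_adj_of_spoke_mem hp hi hmi).2.symm
  obtain ⟨s, hs, hxs⟩ := exists_rim_step hp hx (i := i) fun k hk hkx hmk =>
    (hspoke k hk hmk).resolve_right fun hkj =>
      attach_ne_attach hℓ hi hj hij (hkj ▸ hkx).symm
  have hrun := add_natCast_mul_mem_of_spokes hp hi hj hij hspoke hs hx hxs
  have hcard := hp.card_le_length
    (s := ((Finset.range (ℓ - 3)).image fun t : ℕ => attach ℓ i + t * s).disjSum {0, i, j}) <| by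
      rintro (z | k) hz
      · obtain ⟨t, ht, rfl⟩ := Finset.mem_image.mp (Finset.inl_mem_disjSum.mp hz)
        exact hrun t (by simp at ht; omega)
      · simp only [Finset.inr_mem_disjSum, Finset.mem_insert, Finset.mem_singleton] at hz
        rcases hz with rfl | rfl | rfl
        exacts [hc, hmi, hmj]
  have hinj : Set.InjOn (fun t : ℕ => attach ℓ i + t * s) (Finset.range (ℓ - 3)) :=
    (Fin.injOn_add_natCast_mul _ hs).mono fun t ht => by simp at ht ⊢; omega
  rw [Finset.card_disjSum, Finset.card_image_of_injOn hinj, Finset.card_range,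
    Finset.card_eq_three.mpr ⟨0, i, j, hi.symm, hj.symm, hij, rfl⟩] at hcard
  omega

end Cycle

end WGraph

/-- For `ℓ ≥ 7`, the graph `W(ℓ)` has girth at least `ℓ`: it contains
no cycle of length less than `ℓ`. -/
theorem stmt9 (ℓ : ℕ) (hℓ : 7 ≤ ℓ) :
    ∀ (v : Fin (3 * ℓ - 11) ⊕ Fin 4) (c : (WGraph ℓ).Walk v v),
      c.IsCycle → ℓ ≤ c.length := by
  have : NeZero (3 * ℓ - 11) := ⟨by omega⟩
  intro v c hc
  by_cases hcenter : .inr 0 ∈ c.support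
  · exact WGraph.le_length_of_center_mem (by omega) hc hcenter
  · have := WGraph.le_length_of_center_not_mem hc hcenter
    omega
end

section
/- Let ℓ ≥ 7 be an integer. For every two distinct non-adjacent vertices u and v of the graph W(ℓ), there is a cycle in W(ℓ) of length either 2ℓ−4 or 2ℓ−3 that contains both u and v. -/
/-!
Write `a₀, a₁, a₂` for the rim vertices carrying the spokes (indices mod 3). For each `k`, the
cycle `C_k` (`wheelCycle`) goes from the centre down the spoke to `a_{k+1}`, along the rim the long
way round to `a_k`, and back up the spoke at `a_k`. It avoids exactly the third spoke and the
interior of the rim arc from `a_k` to `a_{k+1}`, and has length `4 + (3ℓ - 11) - |arc_k|`, which is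
`2ℓ - 3` or `2ℓ - 4`. Every vertex therefore misses at most one of `C₀, C₁, C₂`; two vertices miss
at most two of them, hence both lie on the third.
-/

open SimpleGraph

namespace SimpleGraph

variable {V : Type*} {G : SimpleGraph V}

theorem Walk.IsPath.isCycle_cons_concat_concat {a b c m m' : V} {p : G.Walk a b}
    (hp : p.IsPath) (hcm : G.Adj c m) (hma : G.Adj m a) (hbm' : G.Adj b m')
    (hm'c : G.Adj m' c) (hmm' : m ≠ m') (hm : m ∉ p.support) (hm' : m' ∉ p.support)
    (hc : c ∉ p.support) :
    (Walk.cons hcm (((Walk.cons hma p).concat hbm').concat hm'c)).IsCycle := by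
  rw [Walk.isCycle_iff_isPath_tail_and_le_length]
  refine ⟨?_, by simp⟩
  simp only [Walk.tail_cons]
  refine ((hp.cons hm).concat ?_ hbm').concat ?_ hm'c
  · simp [hm', hmm'.symm]
  · simp [Walk.support_concat, hc, hcm.ne, hm'c.ne.symm]

section Sequence

variable {f : ℕ → V} (hf : ∀ i, G.Adj (f i) (f (i + 1)))

def seqWalk (i : ℕ) : (d : ℕ) → G.Walk (f i) (f (i + d))
  | 0 => Walk.nil
  | d + 1 => (seqWalk i d).concat (hf (i + d))

@[simp]
theorem length_seqWalk (i d : ℕ) : (seqWalk hf i d).length = d := by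
  induction d with
  | zero => rfl
  | succ d ih => simp [seqWalk, ih]

theorem support_seqWalk (i d : ℕ) :
    (seqWalk hf i d).support = (List.range (d + 1)).map (fun k ↦ f (i + k)) := by
  induction d with
  | zero => rfl
  | succ d ih => rw [seqWalk, Walk.support_concat, ih, List.range_succ (n := d + 1)]; simp

theorem mem_support_seqWalk {i d : ℕ} {x : V} :
    x ∈ (seqWalk hf i d).support ↔ ∃ k ≤ d, f (i + k) = x := by
  simp [support_seqWalk]

theorem isPath_seqWalk {i d : ℕ} (hinj : Set.InjOn (fun k ↦ f (i + k)) (Set.Iic d)) :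
    (seqWalk hf i d).IsPath := by
  rw [Walk.isPath_def, support_seqWalk]
  refine List.nodup_range.map_on fun k₁ hk₁ k₂ hk₂ h ↦ hinj ?_ ?_ h <;>
    simp_all

end Sequence

end SimpleGraph

namespace WGraph

variable {ℓ : ℕ}

abbrev center : Fin (3 * ℓ - 11) ⊕ Fin 4 := .inr 0

/-- `mid k` and `spokePos ℓ k` are `m_{k+1}` and the index of `a_{k+1}` in the paper. -/
def mid (k : Fin 3) : Fin (3 * ℓ - 11) ⊕ Fin 4 := .inr k.succ

def spokePos (ℓ : ℕ) (k : Fin 3) : ℕ := ![0, ℓ - 4, 2 * ℓ - 8] k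

theorem center_adj_mid (k : Fin 3) : (WGraph ℓ).Adj center (mid k) := by
  rw [WGraph, fromRel_adj]
  exact ⟨by simp [mid, (Fin.succ_ne_zero k).symm],
    Or.inl (Or.inr (Or.inl ⟨k.succ, by simp, rfl, rfl⟩))⟩

theorem mid_adj_inl (k : Fin 3) (i : Fin (3 * ℓ - 11)) (hi : (i : ℕ) = spokePos ℓ k) :
    (WGraph ℓ).Adj (mid k) (.inl i) := by
  rw [WGraph, fromRel_adj]
  refine ⟨by simp [mid], Or.inl (Or.inr (Or.inr ?_))⟩
  fin_cases k <;> simp_all [mid, spokePos]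

def rim (hℓ : 5 ≤ ℓ) (i : ℕ) : Fin (3 * ℓ - 11) ⊕ Fin 4 :=
  .inl ⟨i % (3 * ℓ - 11), Nat.mod_lt _ (by omega)⟩

theorem rim_eq_inl (hℓ : 5 ≤ ℓ) {x : ℕ} {i : Fin (3 * ℓ - 11)} (q : ℕ)
    (h : x = i + (3 * ℓ - 11) * q) :
    rim hℓ x = .inl i := by
  simp [rim, h, Nat.mod_eq_of_lt i.isLt]

theorem rim_adj_rim_succ (hℓ : 5 ≤ ℓ) (i : ℕ) :
    (WGraph ℓ).Adj (rim hℓ i) (rim hℓ (i + 1)) := by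
  have hmod : (i % (3 * ℓ - 11) + 1) % (3 * ℓ - 11) = (i + 1) % (3 * ℓ - 11) := Nat.mod_add_mod ..
  rw [WGraph, fromRel_adj]
  refine ⟨fun h ↦ ?_, Or.inl (Or.inl ⟨_, _, rfl, rfl, hmod⟩)⟩
  have h' : (i + 1) % (3 * ℓ - 11) = (i + 0) % (3 * ℓ - 11) := by
    simpa [rim, Fin.ext_iff] using h.symm
  have := Nat.ModEq.add_left_cancel' i h'
  rw [Nat.ModEq, Nat.mod_eq_of_lt (by omega : 1 < 3 * ℓ - 11)] at this
  simp at this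

theorem rim_add_injOn (hℓ : 5 ≤ ℓ) (s d : ℕ) (hd : d < 3 * ℓ - 11) :
    Set.InjOn (fun k ↦ rim hℓ (s + k)) (Set.Iic d) := by
  intro k₁ hk₁ k₂ hk₂ h
  have h' : (s + k₁) % (3 * ℓ - 11) = (s + k₂) % (3 * ℓ - 11) := by
    simpa [rim, Fin.ext_iff] using h
  have := Nat.ModEq.add_left_cancel' s h'
  rwa [Nat.ModEq, Nat.mod_eq_of_lt (by simp at hk₁; omega),
    Nat.mod_eq_of_lt (by simp at hk₂; omega)] at this

theorem spokePos_lt (hℓ : 5 ≤ ℓ) (k : Fin 3) : spokePos ℓ k < 3 * ℓ - 11 := by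
  fin_cases k <;> simp [spokePos] <;> omega

theorem mid_adj_rim (hℓ : 5 ≤ ℓ) (k : Fin 3) {x : ℕ}
    (hx : ∃ q, x = spokePos ℓ k + (3 * ℓ - 11) * q) :
    (WGraph ℓ).Adj (mid k) (rim hℓ x) := by
  obtain ⟨q, hq⟩ := hx
  rw [rim_eq_inl hℓ (i := ⟨_, spokePos_lt hℓ k⟩) q hq]
  exact mid_adj_inl k _ rfl

def cycleStart (ℓ : ℕ) (k : Fin 3) : ℕ := spokePos ℓ (k + 1)

def cycleRimLen (ℓ : ℕ) (k : Fin 3) : ℕ := ![2 * ℓ - 7, 2 * ℓ - 7, 2 * ℓ - 8] k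

def wheelCycle (hℓ : 5 ≤ ℓ) (k : Fin 3) : (WGraph ℓ).Walk center center :=
  Walk.cons (center_adj_mid (k + 1))
    (((Walk.cons (mid_adj_rim hℓ (k + 1) (x := cycleStart ℓ k) ⟨0, by simp [cycleStart]⟩)
      (seqWalk (rim_adj_rim_succ hℓ) (cycleStart ℓ k) (cycleRimLen ℓ k))).concat
        (mid_adj_rim hℓ k (by fin_cases k <;> simp [cycleStart, cycleRimLen, spokePos]
          <;> first | exact ⟨0, by omega⟩ | exact ⟨1, by omega⟩)).symm).concat
      (center_adj_mid k).symm)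

theorem isCycle_wheelCycle (hℓ : 5 ≤ ℓ) (k : Fin 3) : (wheelCycle hℓ k).IsCycle := by
  refine (isPath_seqWalk _ (rim_add_injOn hℓ _ _ ?_)).isCycle_cons_concat_concat
    _ _ _ _ ?_ ?_ ?_ ?_
  · fin_cases k <;> simp [cycleRimLen] <;> omega
  · fin_cases k <;> simp [mid]
  all_goals rw [mem_support_seqWalk]; simp [rim, mid]

theorem length_wheelCycle (hℓ : 5 ≤ ℓ) (k : Fin 3) :
    (wheelCycle hℓ k).length = 2 * ℓ - 4 ∨ (wheelCycle hℓ k).length = 2 * ℓ - 3 := by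
  simp only [wheelCycle, Walk.length_cons, Walk.length_concat, length_seqWalk]
  fin_cases k <;> simp [cycleRimLen] <;> omega

theorem mid_mem_support_wheelCycle (hℓ : 5 ≤ ℓ) {j k : Fin 3} (h : j = k ∨ j = k + 1) :
    mid j ∈ (wheelCycle hℓ k).support := by
  rcases h with rfl | rfl <;> simp [wheelCycle, Walk.support_concat]

theorem inl_mem_support_wheelCycle (hℓ : 5 ≤ ℓ) (k : Fin 3) (i : Fin (3 * ℓ - 11))
    (h : cycleStart ℓ k ≤ i ∧ i ≤ cycleStart ℓ k + cycleRimLen ℓ k ∨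
      cycleStart ℓ k ≤ i + (3 * ℓ - 11) ∧ i + (3 * ℓ - 11) ≤ cycleStart ℓ k + cycleRimLen ℓ k) :
    Sum.inl i ∈ (wheelCycle hℓ k).support := by
  simp only [wheelCycle, Walk.support_cons, Walk.support_concat, List.mem_cons,
    List.mem_append, mem_support_seqWalk]
  refine Or.inr (Or.inl (Or.inl (Or.inr ?_)))
  rcases h with h | h
  · exact ⟨i - cycleStart ℓ k, by omega, rim_eq_inl hℓ 0 (by omega)⟩
  · exact ⟨i + (3 * ℓ - 11) - cycleStart ℓ k, by omega, rim_eq_inl hℓ 1 (by omega)⟩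

theorem exists_forall_ne_mem_support_wheelCycle (hℓ : 5 ≤ ℓ) (x : Fin (3 * ℓ - 11) ⊕ Fin 4) :
    ∃ j, ∀ k ≠ j, x ∈ (wheelCycle hℓ k).support := by
  rcases x with i | m
  · have hi := i.isLt
    refine ⟨if (i : ℕ) ≤ ℓ - 4 then 0 else if (i : ℕ) ≤ 2 * ℓ - 8 then 1 else 2,
      fun k hk ↦ inl_mem_support_wheelCycle hℓ k i ?_⟩
    fin_cases k <;> split_ifs at hk <;> simp_all [cycleStart, cycleRimLen, spokePos] <;> omega
  · induction m using Fin.cases with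
    | zero => exact ⟨0, fun k _ ↦ (wheelCycle hℓ k).start_mem_support⟩
    | succ j =>
      refine ⟨j + 1, fun k hk ↦ mid_mem_support_wheelCycle hℓ ?_⟩
      fin_cases j <;> fin_cases k <;> simp_all

end WGraph

open WGraph in
theorem stmt10_general (ℓ : ℕ) (hℓ : 7 ≤ ℓ) (u v : Fin (3 * ℓ - 11) ⊕ Fin 4) :
    ∃ (w : Fin (3 * ℓ - 11) ⊕ Fin 4) (c : (WGraph ℓ).Walk w w),
      c.IsCycle ∧ (c.length = 2 * ℓ - 4 ∨ c.length = 2 * ℓ - 3) ∧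
        u ∈ c.support ∧ v ∈ c.support := by
  have h5 : 5 ≤ ℓ := by omega
  obtain ⟨a, ha⟩ := exists_forall_ne_mem_support_wheelCycle h5 u
  obtain ⟨b, hb⟩ := exists_forall_ne_mem_support_wheelCycle h5 v
  obtain ⟨k, hka, hkb⟩ := Fin.exists_ne_and_ne_of_two_lt a b (by norm_num)
  exact ⟨_, wheelCycle h5 k, isCycle_wheelCycle h5 k, length_wheelCycle h5 k, ha k hka, hb k hkb⟩

/-- For `ℓ ≥ 7`, every two distinct non-adjacent vertices of `W(ℓ)` lie
on a common cycle of length `2ℓ-4` or `2ℓ-3`. -/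
theorem stmt10 (ℓ : ℕ) (hℓ : 7 ≤ ℓ) (u v : Fin (3 * ℓ - 11) ⊕ Fin 4)
    (huv : u ≠ v) (hnadj : ¬ (WGraph ℓ).Adj u v) :
    ∃ (w : Fin (3 * ℓ - 11) ⊕ Fin 4) (c : (WGraph ℓ).Walk w w),
      c.IsCycle ∧ (c.length = 2 * ℓ - 4 ∨ c.length = 2 * ℓ - 3) ∧
        u ∈ c.support ∧ v ∈ c.support :=
  stmt10_general ℓ hℓ u v
end

section
/- Let g ≥ 1 and m ≥ 2 be integers. The graph H(g, m) contains no cycle of length less than 2m + 2; in particular, if m = ℓ − 4 for an integer ℓ ≥ 6, then H(g, ℓ−4) has girth at least ℓ. -/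
/-!
Let `a = inr 0`, `b = inr 1`. The function that is `0` at `a`, `m + 2` at `b`, and one more than
the cyclic distance from `i` to `0` modulo `2m` at `u_i` changes by at most one along every edge,
so every `a`–`b` walk has length at least `m + 2`. A trail in the outer cycle can never turn back,
so its endpoints differ by plus or minus its length modulo `2(g+1)m`.

Hence a cycle through both `a` and `b` is the union of two `a`–`b` paths; a cycle through exactly
one hub closes up a path in the outer cycle between two neighbours of that hub, which are congruent
modulo `2m`, so the path has length at least `2m`; and a cycle through neither hub goes around the
whole outer cycle, of length `2(g+1)m ≥ 4m`.
-/

open SimpleGraph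

/-- The graph `H(g, m)`: a cycle `u_0 ⋯ u_{2(g+1)m - 1}` of length `2(g+1)m` (the
vertices `Sum.inl i`, the "outer cycle"), together with two extra vertices
`a = Sum.inr 0`, adjacent to `u_{2jm}` for `j = 0, …, g`, and `b = Sum.inr 1`,
adjacent to `u_{(2j+1)m}` for `j = 0, …, g`. -/
def HGraph (g m : ℕ) : SimpleGraph (Fin (2 * (g + 1) * m) ⊕ Fin 2) :=
  SimpleGraph.fromRel (fun u v =>
    (∃ i j : Fin (2 * (g + 1) * m), u = .inl i ∧ v = .inl j ∧
      ((i : ℕ) + 1) % (2 * (g + 1) * m) = (j : ℕ)) ∨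
    (∃ (i : Fin (2 * (g + 1) * m)) (j : ℕ), j ≤ g ∧ (i : ℕ) = 2 * j * m ∧
      u = .inr 0 ∧ v = .inl i) ∨
    (∃ (i : Fin (2 * (g + 1) * m)) (j : ℕ), j ≤ g ∧ (i : ℕ) = (2 * j + 1) * m ∧
      u = .inr 1 ∧ v = .inl i))

namespace ZMod

lemma natAbs_valMinAbs_one_le (n : ℕ) : (1 : ZMod n).valMinAbs.natAbs ≤ 1 := by
  rcases n with _ | _ | n
  · simp
  · simp [Subsingleton.elim (1 : ZMod 1) 0]
  · rw [show (1 : ZMod (n + 2)) = ((1 : ℕ) : ZMod (n + 2)) from Nat.cast_one.symm,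
      valMinAbs_natCast_of_le_half (by omega)]
    simp

lemma abs_natAbs_valMinAbs_add_one_sub_le {n : ℕ} (x : ZMod n) :
    |((x + 1).valMinAbs.natAbs : ℤ) - x.valMinAbs.natAbs| ≤ 1 := by
  have hup := (natAbs_valMinAbs_add_le x 1).trans (Int.natAbs_add_le _ _)
  have hdown := (natAbs_valMinAbs_add_le (x + 1) (-1)).trans (Int.natAbs_add_le _ _)
  rw [add_neg_cancel_right, natAbs_valMinAbs_neg] at hdown
  have := natAbs_valMinAbs_one_le n
  rw [abs_le]
  omega

end ZMod

namespace SimpleGraph.Walk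

variable {V : Type*} {G : SimpleGraph V}

theorem abs_sub_le_length {f : V → ℤ} (hf : ∀ ⦃x y⦄, G.Adj x y → |f x - f y| ≤ 1) {u v : V}
    (p : G.Walk u v) : |f u - f v| ≤ p.length := by
  induction p with
  | nil => simp
  | @cons u w v h p ih =>
    calc |f u - f v| ≤ |f u - f w| + |f w - f v| := abs_sub_le _ _ _
      _ ≤ 1 + p.length := add_le_add (hf h) ih
      _ = (cons h p).length := by push_cast [length_cons]; ring

theorem two_mul_le_length_of_mem_support [DecidableEq V] {v x y : V} (c : G.Walk v v)
    (hx : x ∈ c.support) (hy : y ∈ c.support) {n : ℕ} (hn : ∀ p : G.Walk x y, n ≤ p.length) :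
    2 * n ≤ c.length := by
  have hy' : y ∈ (c.rotate x hx).support := (c.mem_support_rotate_iff x hx).2 hy
  have hsplit := congrArg length ((c.rotate x hx).take_spec hy')
  rw [length_append, length_rotate] at hsplit
  have h₁ := hn ((c.rotate x hx).takeUntil y hy')
  have h₂ := hn ((c.rotate x hx).dropUntil y hy').reverse
  rw [length_reverse] at h₂
  omega

theorem IsCycle.exists_isPath_of_adj_of_adj {x : V} {c : G.Walk x x} (hc : c.IsCycle) :
    ∃ (u w : V) (p : G.Walk u w), G.Adj x u ∧ G.Adj w x ∧ p.IsPath ∧ x ∉ p.support ∧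
      (∀ y ∈ p.support, y ∈ c.support) ∧ c.length = p.length + 2 := by
  cases c with
  | nil => exact absurd rfl hc.ne_nil
  | @cons _ u _ h q =>
    obtain ⟨hq, -⟩ := (cons_isCycle_iff q h).1 hc
    have hq_nil : ¬q.Nil := fun hnil => G.irrefl (hnil.eq ▸ h)
    have hsupp := support_dropLast_concat hq_nil
    refine ⟨u, q.penultimate, q.dropLast, h, q.adj_penultimate hq_nil, hq.dropLast, ?_, ?_, ?_⟩
    · have := hq.support_nodup
      rw [← hsupp, List.nodup_append] at this
      exact fun hx => this.2.2 x hx x (by simp) rfl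
    · intro y hy
      rw [support_cons, ← hsupp]
      simp [hy]
    · rw [length_cons, ← length_dropLast_add_one hq_nil]

variable {R : Type*} [CommRing R] {s : Set V} {φ : V → R}

theorem IsTrail.sub_eq_length_mul_sub_snd (hφ : s.InjOn φ)
    (hstep : ∀ x ∈ s, ∀ y ∈ s, G.Adj x y → φ y = φ x + 1 ∨ φ x = φ y + 1) {u v : V}
    {p : G.Walk u v} (hp : p.IsTrail) (hs : ∀ w ∈ p.support, w ∈ s) :
    φ v - φ u = p.length * (φ p.snd - φ u) := by
  induction p with
  | nil => simp
  | @cons u w v h q ih =>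
    have hq := ih hp.of_cons (fun y hy => hs y (by simp [hy]))
    -- stepping back to `u` would use the edge `s(u, w)` twice
    have hturn : (q.length : R) * (φ q.snd - φ w) = q.length * (φ w - φ u) := by
      cases q with
      | nil => simp
      | @cons _ z _ h' r =>
        congr 1
        have hu := hs u (by simp)
        have hw := hs w (by simp)
        have hz := hs z (by simp)
        have hzu : z ≠ u := by
          rintro rfl
          have := hp.edges_nodup
          simp [Sym2.eq_swap] at this
        rw [snd_cons]
        rcases hstep u hu w hw h with h₁ | h₁ <;> rcases hstep w hw z hz h' with h₂ | h₂
        · linear_combination h₂ - h₁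
        · exact absurd (hφ hz hu (by linear_combination h₁ - h₂)) hzu
        · exact absurd (hφ hz hu (by linear_combination h₂ - h₁)) hzu
        · linear_combination -h₂ + h₁
    rw [length_cons, snd_cons]
    push_cast
    linear_combination hq + hturn

theorem IsTrail.natCast_length_eq_or (hφ : s.InjOn φ)
    (hstep : ∀ x ∈ s, ∀ y ∈ s, G.Adj x y → φ y = φ x + 1 ∨ φ x = φ y + 1) {u v : V}
    {p : G.Walk u v} (hp : p.IsTrail) (hs : ∀ w ∈ p.support, w ∈ s) :
    (p.length : R) = φ v - φ u ∨ (p.length : R) = φ u - φ v := by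
  have hdisp := hp.sub_eq_length_mul_sub_snd hφ hstep hs
  cases p with
  | nil => simp
  | @cons _ w _ h q =>
    rw [snd_cons] at hdisp
    generalize ((cons h q).length : R) = L at hdisp ⊢
    rcases hstep u (hs u (by simp)) w (hs w (by simp)) h with h₁ | h₁
    · left
      linear_combination -hdisp - L * h₁
    · right
      linear_combination hdisp - L * h₁

end SimpleGraph.Walk

namespace HGraph

variable {g m : ℕ}

lemma natCast_eq_add_one_of_adj {k : ℕ} (hk : k ∣ 2 * (g + 1) * m) {i j : Fin (2 * (g + 1) * m)}
    (h : (HGraph g m).Adj (.inl i) (.inl j)) :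
    ((j : ℕ) : ZMod k) = (i : ℕ) + 1 ∨ ((i : ℕ) : ZMod k) = (j : ℕ) + 1 := by
  have hcast (a : ℕ) : ((a % (2 * (g + 1) * m) : ℕ) : ZMod k) = a :=
    (ZMod.natCast_eq_natCast_iff' _ _ _).2 (Nat.mod_mod_of_dvd a hk)
  simp only [HGraph, fromRel_adj, Sum.inl.injEq, reduceCtorEq, false_and, and_false,
    exists_false, or_false, exists_and_left, exists_eq_left'] at h
  rcases h.2 with h | h
  · left
    rw [← h, hcast, Nat.cast_succ]
  · right
    rw [← h, hcast, Nat.cast_succ]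

lemma exists_eq_inl_of_adj_inr {t : Fin 2} {w : Fin (2 * (g + 1) * m) ⊕ Fin 2}
    (h : (HGraph g m).Adj (.inr t) w) :
    ∃ i : Fin (2 * (g + 1) * m), w = .inl i ∧
      ((i : ℕ) : ZMod (2 * m)) = (((t : ℕ) * m : ℕ) : ZMod (2 * m)) := by
  have h2m : ((2 * m : ℕ) : ZMod (2 * m)) = 0 := ZMod.natCast_self _
  push_cast at h2m
  simp only [HGraph, fromRel_adj, exists_and_left, reduceCtorEq, false_and, exists_false,
    Sum.inr.injEq, false_or, and_false, or_self, or_false] at h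
  rcases h.2 with ⟨i, j, -, hi, rfl, rfl⟩ | ⟨i, j, -, hi, rfl, rfl⟩ <;>
  · refine ⟨i, rfl, ?_⟩
    rw [hi]
    push_cast [Fin.val_zero, Fin.val_one]
    linear_combination (j : ZMod (2 * m)) * h2m

def potential (g m : ℕ) : Fin (2 * (g + 1) * m) ⊕ Fin 2 → ℤ
  | .inl i => (((i : ℕ) : ZMod (2 * m)).valMinAbs.natAbs : ℤ) + 1
  | .inr t => ((t : ℕ) : ℤ) * (m + 2)

lemma abs_potential_sub_le_one {x y : Fin (2 * (g + 1) * m) ⊕ Fin 2} (h : (HGraph g m).Adj x y) :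
    |potential g m x - potential g m y| ≤ 1 := by
  have hub (t : Fin 2) (w) (h : (HGraph g m).Adj (.inr t) w) :
      |potential g m (.inr t) - potential g m w| ≤ 1 := by
    obtain ⟨i, rfl, hi⟩ := exists_eq_inl_of_adj_inr h
    have ht : (t : ℕ) * m ≤ 2 * m / 2 := by fin_cases t <;> simp
    simp only [potential]
    rw [hi, ZMod.valMinAbs_natCast_of_le_half ht]
    fin_cases t <;> simp
  rcases x with i | t <;> rcases y with j | t'
  · simp only [potential, add_sub_add_right_eq_sub]
    rcases natCast_eq_add_one_of_adj (k := 2 * m) ⟨g + 1, by ring⟩ h with hj | hi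
    · rw [hj, abs_sub_comm]
      exact ZMod.abs_natAbs_valMinAbs_add_one_sub_le _
    · rw [hi]
      exact ZMod.abs_natAbs_valMinAbs_add_one_sub_le _
  · rw [abs_sub_comm]
    exact hub _ _ h.symm
  · exact hub _ _ h
  · exact hub _ _ h

lemma add_two_le_length (p : (HGraph g m).Walk (.inr 0) (.inr 1)) : m + 2 ≤ p.length := by
  have := p.abs_sub_le_length (f := potential g m) fun _ _ h => abs_potential_sub_le_one h
  simp only [potential, Fin.val_zero, Fin.val_one] at this
  push_cast at this
  rw [zero_mul, one_mul, zero_sub, abs_neg, abs_of_nonneg (by positivity)] at this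
  exact_mod_cast this

lemma natCast_length_eq_or_of_isTrail {k : ℕ} (hk : k ∣ 2 * (g + 1) * m)
    {i j : Fin (2 * (g + 1) * m)} {p : (HGraph g m).Walk (.inl i) (.inl j)} (hp : p.IsTrail)
    (hs : ∀ w ∈ p.support, w ∈ Set.range Sum.inl) :
    (p.length : ZMod k) = (j : ℕ) - (i : ℕ) ∨ (p.length : ZMod k) = (i : ℕ) - (j : ℕ) := by
  set φ : Fin (2 * (g + 1) * m) ⊕ Fin 2 → ZMod (2 * (g + 1) * m) :=
    Sum.elim (fun i => ((i : ℕ) : ZMod (2 * (g + 1) * m))) 0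
  have hφ : (Set.range Sum.inl).InjOn φ := by
    rintro _ ⟨i, rfl⟩ _ ⟨j, rfl⟩ hij
    exact congrArg Sum.inl (Fin.ext (CharP.natCast_injOn_Iio _ _ i.isLt j.isLt hij))
  have hstep : ∀ x ∈ Set.range Sum.inl, ∀ y ∈ Set.range Sum.inl, (HGraph g m).Adj x y →
      φ y = φ x + 1 ∨ φ x = φ y + 1 := by
    rintro _ ⟨i, rfl⟩ _ ⟨j, rfl⟩ h
    exact natCast_eq_add_one_of_adj dvd_rfl h
  have := (hp.natCast_length_eq_or hφ hstep hs).imp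
    (congrArg (ZMod.castHom hk (ZMod k))) (congrArg (ZMod.castHom hk (ZMod k)))
  simpa only [map_natCast, map_sub, φ, Sum.elim_inl] using this

lemma dvd_length_of_isTrail {v : Fin (2 * (g + 1) * m) ⊕ Fin 2} {c : (HGraph g m).Walk v v}
    (hc : c.IsTrail) (hhub : ∀ t, .inr t ∉ c.support) : 2 * (g + 1) * m ∣ c.length := by
  have hs : ∀ w ∈ c.support, w ∈ Set.range Sum.inl := by
    rintro (i | t) hw
    · exact ⟨i, rfl⟩
    · exact absurd hw (hhub t)
  obtain ⟨i, rfl⟩ := hs v c.start_mem_support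
  rw [← ZMod.natCast_eq_zero_iff]
  simpa using natCast_length_eq_or_of_isTrail dvd_rfl hc hs

lemma two_mul_add_two_le_length_of_isCycle {t : Fin 2}
    {c : (HGraph g m).Walk (.inr t) (.inr t)} (hc : c.IsCycle)
    (hhub : ∀ s, .inr s ∈ c.support → s = t) : 2 * m + 2 ≤ c.length := by
  obtain ⟨u, w, p, hu, hw, hp, ht, hsupp, hlen⟩ := hc.exists_isPath_of_adj_of_adj
  obtain ⟨i, rfl, hi⟩ := exists_eq_inl_of_adj_inr hu
  obtain ⟨j, rfl, hj⟩ := exists_eq_inl_of_adj_inr hw.symm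
  have hs : ∀ y ∈ p.support, y ∈ Set.range Sum.inl := by
    rintro (k | s) hy
    · exact ⟨k, rfl⟩
    · exact absurd (hhub s (hsupp _ hy) ▸ hy) ht
  have hdvd : 2 * m ∣ p.length := by
    rw [← ZMod.natCast_eq_zero_iff]
    rcases natCast_length_eq_or_of_isTrail (k := 2 * m) ⟨g + 1, by ring⟩ hp.isTrail hs
      with h | h <;> rwa [hi, hj, sub_self] at h
  have hpos : 0 < p.length := by
    have := hc.three_le_length
    omega
  have := Nat.le_of_dvd hpos hdvd
  omega

end HGraph

theorem stmt13_general (g m : ℕ) (hg : 1 ≤ g) :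
    (∀ (v : Fin (2 * (g + 1) * m) ⊕ Fin 2) (c : (HGraph g m).Walk v v),
      c.IsCycle → 2 * m + 2 ≤ c.length) ∧
    (∀ ℓ : ℕ, 6 ≤ ℓ → m = ℓ - 4 →
      ∀ (v : Fin (2 * (g + 1) * m) ⊕ Fin 2) (c : (HGraph g m).Walk v v),
        c.IsCycle → ℓ ≤ c.length) := by
  have girth (v) (c : (HGraph g m).Walk v v) (hc : c.IsCycle) : 2 * m + 2 ≤ c.length := by
    by_cases ha : .inr 0 ∈ c.support <;> by_cases hb : .inr 1 ∈ c.support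
    · have := c.two_mul_le_length_of_mem_support ha hb HGraph.add_two_le_length
      omega
    · simpa using HGraph.two_mul_add_two_le_length_of_isCycle (hc.rotate ha)
        (Fin.forall_fin_two.2 ⟨fun _ => rfl, fun h => absurd (by simpa using h) hb⟩)
    · simpa using HGraph.two_mul_add_two_le_length_of_isCycle (hc.rotate hb)
        (Fin.forall_fin_two.2 ⟨fun h => absurd (by simpa using h) ha, fun _ => rfl⟩)
    · have hdvd := HGraph.dvd_length_of_isTrail hc.isTrail (Fin.forall_fin_two.2 ⟨ha, hb⟩)
      have hlen := hc.three_le_length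
      have hN : 0 < 2 * (g + 1) * m := Nat.pos_of_dvd_of_pos hdvd (by omega)
      have hm : 0 < m := Nat.pos_of_ne_zero fun hm => by simp [hm] at hN
      have := Nat.le_of_dvd (by omega) hdvd
      nlinarith
  exact ⟨girth, fun ℓ _ hℓ v c hc => by have := girth v c hc; omega⟩

/-- For `g ≥ 1` and `m ≥ 2`, the graph `H(g, m)` contains no cycle of
length less than `2m + 2`; in particular, for `m = ℓ - 4` with `ℓ ≥ 6`, the graph
`H(g, ℓ-4)` has girth at least `ℓ`. -/
theorem stmt13 (g m : ℕ) (hg : 1 ≤ g) (hm : 2 ≤ m) :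
    (∀ (v : Fin (2 * (g + 1) * m) ⊕ Fin 2) (c : (HGraph g m).Walk v v),
      c.IsCycle → 2 * m + 2 ≤ c.length) ∧
    (∀ ℓ : ℕ, 6 ≤ ℓ → m = ℓ - 4 →
      ∀ (v : Fin (2 * (g + 1) * m) ⊕ Fin 2) (c : (HGraph g m).Walk v v),
        c.IsCycle → ℓ ≤ c.length) :=
  stmt13_general g m hg
end

section
/- Let g ≥ 1 and m ≥ 2 be integers, and let x = u_s and y = u_t be two vertices of the outer cycle of H(g, m) whose distance along that cycle is greater than m. Then there exists a cycle in H(g, m) of length at most 2m + 4 that contains both x and y. -/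
/-!
The hubs cut the outer cycle into `2(g+1)` segments `u_{pm} ⋯ u_{(p+1)m}` of length `m`, and
the two ends of each segment are joined to different hubs. Write `x = u_{pm+r}` with `r < m`.
If `y` lies on the segment of `x` or on the next one, these two segments and the hub adjacent
to both of their ends form a cycle of length `2m + 2`; likewise if `y` lies on the previous
segment. Otherwise the segments of `x` and `y` are disjoint, and joining them through the two
hubs gives a cycle of length `2m + 4`.
-/

open SimpleGraph

namespace SimpleGraph.Walk

variable {V : Type*} {G : SimpleGraph V}

lemma isCycle_cons_concat {u v w : V} {p : G.Walk v w} (hp : p.IsPath) (hu : u ∉ p.support)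
    (hl : 1 ≤ p.length) (h₁ : G.Adj u v) (h₂ : G.Adj w u) :
    (cons h₁ (p.concat h₂)).IsCycle := by
  refine isCycle_iff_isPath_tail_and_le_length.mpr ⟨?_, ?_⟩
  · simpa using hp.concat hu h₂
  · simp only [length_cons, length_concat]
    omega

lemma isCycle_append_of_disjoint {a b u v u' v' : V} (hab : a ≠ b)
    {p : G.Walk u v} {q : G.Walk u' v'} (hp : p.IsPath) (hq : q.IsPath)
    (hpq : p.support.Disjoint q.support) (hap : a ∉ p.support) (haq : a ∉ q.support)
    (hbp : b ∉ p.support) (hbq : b ∉ q.support)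
    (h₁ : G.Adj a u) (h₂ : G.Adj v b) (h₃ : G.Adj b u') (h₄ : G.Adj v' a) :
    ((cons h₁ (p.concat h₂)).append (cons h₃ (q.concat h₄))).IsCycle := by
  refine IsPath.isCycle_append ((hp.concat hbp h₂).cons ?_) ((hq.concat haq h₄).cons ?_) ?_
    (by simp)
  · simpa [support_concat, hab] using hap
  · simpa [support_concat, hab.symm] using hbq
  · simp only [support_cons, List.tail_cons, support_concat, List.disjoint_append_left,
      List.disjoint_append_right, List.disjoint_singleton, List.singleton_disjoint]
    exact ⟨⟨hpq, hbq⟩, by simp [hap, hab]⟩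

end SimpleGraph.Walk

lemma Nat.exists_add_mod_eq_of_lt_min {N s t m : ℕ} (hs : s < N) (ht : t < N)
    (h : m < min (s - t + (t - s)) (N - (s - t + (t - s)))) :
    ∃ d, m < d ∧ d + m < N ∧ (s + d) % N = t := by
  rw [lt_min_iff] at h
  rcases le_or_gt s t with hst | hst
  · exact ⟨t - s, by omega, by omega, by rw [Nat.add_sub_cancel' hst, Nat.mod_eq_of_lt ht]⟩
  · refine ⟨N + t - s, by omega, by omega, ?_⟩
    rw [show s + (N + t - s) = t + N by omega, Nat.add_mod_right, Nat.mod_eq_of_lt ht]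

namespace HGraph

/-- The outer-cycle vertex `u_i`, with the index read modulo `2(g+1)m`. -/
def outer (g m : ℕ) [NeZero m] (i : ℕ) : Fin (2 * (g + 1) * m) ⊕ Fin 2 :=
  .inl (Fin.ofNat _ i)

/-- The hub adjacent to `u_{pm}`: `a` for even `p`, `b` for odd `p`. -/
def hub (g m p : ℕ) : Fin (2 * (g + 1) * m) ⊕ Fin 2 :=
  .inr (Fin.ofNat 2 p)

variable {g m : ℕ}

lemma hub_eq_hub_iff {p q : ℕ} : hub g m p = hub g m q ↔ p % 2 = q % 2 := by
  simp [hub, Fin.ext_iff]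

variable [NeZero m]

lemma outer_eq_outer_iff {i j : ℕ} :
    outer g m i = outer g m j ↔ i % (2 * (g + 1) * m) = j % (2 * (g + 1) * m) := by
  simp [outer, Fin.ext_iff]

lemma outer_val (s : Fin (2 * (g + 1) * m)) : outer g m s = .inl s := by
  simp [outer]

lemma outer_add_mul_period (i k : ℕ) : outer g m (i + k * (2 * (g + 1) * m)) = outer g m i := by
  simp [outer_eq_outer_iff]

lemma outer_add_left_inj {x r₁ r₂ : ℕ} (h₁ : r₁ < 2 * (g + 1) * m)
    (h₂ : r₂ < 2 * (g + 1) * m) :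
    outer g m (x + r₁) = outer g m (x + r₂) ↔ r₁ = r₂ := by
  rw [outer_eq_outer_iff]
  refine ⟨fun h => ?_, fun h => h ▸ rfl⟩
  have h' := Nat.ModEq.add_left_cancel' x h
  rwa [Nat.ModEq, Nat.mod_eq_of_lt h₁, Nat.mod_eq_of_lt h₂] at h'

lemma outer_ne_hub (i p : ℕ) : outer g m i ≠ hub g m p := by
  simp [outer, hub]

lemma adj_outer_succ (i : ℕ) : (HGraph g m).Adj (outer g m i) (outer g m (i + 1)) := by
  have hn : 1 < 2 * (g + 1) * m := by
    have := NeZero.pos m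
    nlinarith
  refine (fromRel_adj _ _ _).mpr ⟨?_, .inl (.inl ⟨_, _, rfl, rfl, ?_⟩)⟩
  · simpa using (outer_add_left_inj (x := i) (by omega) hn).not.mpr zero_ne_one
  · simp [Nat.mod_add_mod]

lemma adj_hub_outer (p : ℕ) : (HGraph g m).Adj (hub g m p) (outer g m (p * m)) := by
  refine (fromRel_adj _ _ _).mpr ⟨(outer_ne_hub _ _).symm, .inl (.inr ?_)⟩
  have hP : p % (2 * (g + 1)) < 2 * (g + 1) := Nat.mod_lt _ (by omega)
  have hP2 : p % (2 * (g + 1)) % 2 = p % 2 := Nat.mod_mod_of_dvd _ (dvd_mul_right 2 _)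
  have hval : (Fin.ofNat (2 * (g + 1) * m) (p * m)).val = p % (2 * (g + 1)) * m := by
    rw [Fin.val_ofNat, Nat.mul_mod_mul_right]
  rcases Nat.mod_two_eq_zero_or_one p with h | h
  · refine .inl ⟨_, p % (2 * (g + 1)) / 2, by omega, ?_, ?_, rfl⟩
    · rw [hval]; congr 1; omega
    · simp [hub, Fin.ext_iff, h]
  · refine .inr ⟨_, p % (2 * (g + 1)) / 2, by omega, ?_, ?_, rfl⟩
    · rw [hval]; congr 1; omega
    · simp [hub, Fin.ext_iff, h]

def arc (x : ℕ) : (k : ℕ) → (HGraph g m).Walk (outer g m x) (outer g m (x + k))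
  | 0 => .nil
  | k + 1 => (arc x k).concat (adj_outer_succ (x + k))

lemma length_arc (x k : ℕ) : (arc (g := g) (m := m) x k).length = k := by
  induction k with
  | zero => rfl
  | succ k ih => simp [arc, ih]

lemma mem_support_arc {x k : ℕ} {v : Fin (2 * (g + 1) * m) ⊕ Fin 2} :
    v ∈ (arc x k).support ↔ ∃ r ≤ k, outer g m (x + r) = v := by
  induction k with
  | zero => simp [arc, eq_comm]
  | succ k ih =>
    simp only [arc, Walk.support_concat, List.mem_append, ih, List.mem_singleton]
    constructor
    · rintro (⟨r, hr, rfl⟩ | rfl)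
      exacts [⟨r, by omega, rfl⟩, ⟨k + 1, le_rfl, rfl⟩]
    · rintro ⟨r, hr, rfl⟩
      rcases Nat.lt_or_ge r (k + 1) with h | h
      exacts [.inl ⟨r, by omega, rfl⟩, .inr (by rw [show r = k + 1 by omega])]

lemma hub_notMem_support_arc (p x k : ℕ) : hub g m p ∉ (arc x k).support := by
  rw [mem_support_arc]
  rintro ⟨r, -, h⟩
  exact outer_ne_hub _ _ h

lemma isPath_arc (x : ℕ) {k : ℕ} (hk : k < 2 * (g + 1) * m) :
    (arc (g := g) (m := m) x k).IsPath := by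
  induction k with
  | zero => exact .nil
  | succ k ih =>
    refine (ih (by omega)).concat ?_ _
    rw [mem_support_arc]
    rintro ⟨r, hr, h⟩
    rw [outer_add_left_inj (by omega) hk] at h
    omega

lemma exists_isCycle_two_segments (hn : 2 * m < 2 * (g + 1) * m) (p : ℕ) :
    ∃ c : (HGraph g m).Walk (hub g m p) (hub g m p), c.IsCycle ∧ c.length = 2 * m + 2 ∧
      ∀ r ≤ 2 * m, outer g m (p * m + r) ∈ c.support := by
  have hend : (HGraph g m).Adj (outer g m (p * m + 2 * m)) (hub g m p) := by
    rw [← add_mul, ← hub_eq_hub_iff.mpr (show (p + 2) % 2 = p % 2 by omega)]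
    exact (adj_hub_outer _).symm
  refine ⟨.cons (adj_hub_outer p) ((arc _ _).concat hend),
    Walk.isCycle_cons_concat (isPath_arc _ hn) (hub_notMem_support_arc _ _ _)
      (by rw [length_arc]; have := NeZero.pos m; omega) _ _,
    by simp [length_arc], fun r hr => ?_⟩
  simp only [Walk.support_cons, Walk.support_concat, List.mem_cons, List.mem_append,
    mem_support_arc]
  exact .inr (.inl ⟨r, hr, rfl⟩)

lemma exists_isPath_segment (hn : m < 2 * (g + 1) * m) (e q : ℕ) :
    ∃ (u v : Fin (2 * (g + 1) * m) ⊕ Fin 2) (w : (HGraph g m).Walk u v),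
      (HGraph g m).Adj (hub g m e) u ∧ (HGraph g m).Adj v (hub g m (e + 1)) ∧
      w.IsPath ∧ w.length = m ∧
      ∀ y, y ∈ w.support ↔ ∃ r ≤ m, outer g m (q * m + r) = y := by
  have hstart := adj_hub_outer (g := g) (m := m) q
  have hend := adj_hub_outer (g := g) (m := m) (q + 1)
  rw [add_mul, one_mul] at hend
  by_cases hpar : e % 2 = q % 2
  · rw [← hub_eq_hub_iff.mpr hpar] at hstart
    rw [← hub_eq_hub_iff.mpr (show (e + 1) % 2 = (q + 1) % 2 by omega)] at hend
    exact ⟨_, _, arc _ m, hstart, hend.symm, isPath_arc _ hn, length_arc _ _,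
      fun _ => mem_support_arc⟩
  · rw [← hub_eq_hub_iff.mpr (show e % 2 = (q + 1) % 2 by omega)] at hend
    rw [← hub_eq_hub_iff.mpr (show (e + 1) % 2 = q % 2 by omega)] at hstart
    refine ⟨_, _, (arc _ m).reverse, hend, hstart.symm, (isPath_arc _ hn).reverse, ?_,
      fun _ => ?_⟩
    · rw [Walk.length_reverse, length_arc]
    · rw [Walk.support_reverse, List.mem_reverse, mem_support_arc]

lemma exists_isCycle_far_segments (p k : ℕ) (hk : 2 ≤ k)
    (hkn : (k + 2) * m ≤ 2 * (g + 1) * m) :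
    ∃ c : (HGraph g m).Walk (hub g m p) (hub g m p), c.IsCycle ∧ c.length = 2 * m + 4 ∧
      ∀ r ≤ m, outer g m (p * m + r) ∈ c.support ∧
        outer g m ((p + k) * m + r) ∈ c.support := by
  have hm := NeZero.pos m
  have hkm : 2 * m ≤ k * m := Nat.mul_le_mul_right m hk
  have hn : m < 2 * (g + 1) * m := by nlinarith
  obtain ⟨u, v, w, h₁, h₂, hw, hwl, hws⟩ := exists_isPath_segment hn p p
  obtain ⟨u', v', w', h₃, h₄, hw', hw'l, hw's⟩ := exists_isPath_segment hn (p + 1) (p + k)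
  rw [hub_eq_hub_iff.mpr (show (p + 1 + 1) % 2 = p % 2 by omega)] at h₄
  have hdisj : w.support.Disjoint w'.support := by
    rw [List.disjoint_left]
    rintro _ hy hy'
    obtain ⟨r, hr, rfl⟩ := (hws _).mp hy
    obtain ⟨r', hr', hrr'⟩ := (hw's _).mp hy'
    rw [add_mul, add_assoc, outer_add_left_inj (by nlinarith) (by nlinarith)] at hrr'
    omega
  have hhub : ∀ e, hub g m e ∉ w.support ∧ hub g m e ∉ w'.support := fun e =>
    ⟨fun h => by obtain ⟨r, -, hr⟩ := (hws _).mp h; exact outer_ne_hub _ _ hr,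
      fun h => by obtain ⟨r, -, hr⟩ := (hw's _).mp h; exact outer_ne_hub _ _ hr⟩
  refine ⟨_, Walk.isCycle_append_of_disjoint (hub_eq_hub_iff.not.mpr (by omega)) hw hw' hdisj
    (hhub p).1 (hhub p).2 (hhub _).1 (hhub _).2 h₁ h₂ h₃ h₄, ?_, fun r hr => ?_⟩
  · simp only [Walk.length_append, Walk.length_cons, Walk.length_concat, hwl, hw'l]
    ring
  · simp only [Walk.support_append, Walk.support_cons, Walk.support_concat, List.tail_cons,
      List.mem_append, List.mem_cons, hws, hw's]
    exact ⟨.inl (.inr (.inl ⟨r, hr, rfl⟩)), .inr (.inl ⟨r, hr, rfl⟩)⟩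

lemma exists_isCycle_of_offset (p r d : ℕ) (hr : r < m) (hd : m < d)
    (hdn : d + m < 2 * (g + 1) * m) :
    ∃ (w : Fin (2 * (g + 1) * m) ⊕ Fin 2) (c : (HGraph g m).Walk w w), c.IsCycle ∧
      c.length ≤ 2 * m + 4 ∧ outer g m (p * m + r) ∈ c.support ∧
        outer g m (p * m + (r + d)) ∈ c.support := by
  have hm := NeZero.pos m
  have hn : 2 * m < 2 * (g + 1) * m := by omega
  have hN : 2 * (g + 1) * m = (2 * g + 1) * m + m := by ring
  rcases le_or_gt (r + d) (2 * m) with hD | hD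
  · obtain ⟨c, hc, hcl, hcs⟩ := exists_isCycle_two_segments hn p
    exact ⟨_, c, hc, by omega, hcs r (by omega), hcs _ hD⟩
  rcases lt_or_ge (r + d) ((2 * g + 1) * m) with hD' | hD'
  · have hk : 2 ≤ (r + d) / m := (Nat.le_div_iff_mul_le hm).mpr (by omega)
    have hkn : ((r + d) / m + 2) * m ≤ 2 * (g + 1) * m := by
      have : (r + d) / m * m < (2 * g + 1) * m := by
        have := Nat.div_mul_le_self (r + d) m
        omega
      exact Nat.mul_le_mul_right m (by have := Nat.lt_of_mul_lt_mul_right this; omega)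
    obtain ⟨c, hc, hcl, hcs⟩ := exists_isCycle_far_segments p _ hk hkn
    have ht : (p + (r + d) / m) * m + (r + d) % m = p * m + (r + d) := by
      rw [add_mul, add_assoc, Nat.div_add_mod']
    exact ⟨_, c, hc, by omega, (hcs r hr.le).1, ht ▸ (hcs _ (Nat.mod_lt _ hm).le).2⟩
  · -- the vertex `u_{pm+r+d}` lies on the segment before `u_{pm}`, i.e. the one starting at
    -- `u_{(p + 2g + 1)m}`
    obtain ⟨c, hc, hcl, hcs⟩ := exists_isCycle_two_segments hn (p + (2 * g + 1))
    have hs : outer g m ((p + (2 * g + 1)) * m + (m + r)) = outer g m (p * m + r) := by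
      rw [show (p + (2 * g + 1)) * m + (m + r) = p * m + r + 1 * (2 * (g + 1) * m) by ring,
        outer_add_mul_period]
    have ht : (p + (2 * g + 1)) * m + (r + d - (2 * g + 1) * m) = p * m + (r + d) := by
      rw [add_mul]
      omega
    exact ⟨_, c, hc, by omega, hs ▸ hcs _ (by omega), ht ▸ hcs _ (by omega)⟩

end HGraph

open HGraph in
theorem stmt14_general (g m : ℕ)
    (s t : Fin (2 * (g + 1) * m))
    (hfar : m < min (((s : ℕ) - (t : ℕ)) + ((t : ℕ) - (s : ℕ)))
      (2 * (g + 1) * m - ((((s : ℕ) - (t : ℕ)) + ((t : ℕ) - (s : ℕ)))))) :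
    ∃ (w : Fin (2 * (g + 1) * m) ⊕ Fin 2) (c : (HGraph g m).Walk w w),
      c.IsCycle ∧ c.length ≤ 2 * m + 4 ∧
        Sum.inl s ∈ c.support ∧ Sum.inl t ∈ c.support := by
  have : NeZero m := ⟨by rintro rfl; simpa using s.pos⟩
  obtain ⟨d, hd, hdn, hdt⟩ := Nat.exists_add_mod_eq_of_lt_min s.isLt t.isLt hfar
  obtain ⟨w, c, hc, hcl, hsc, htc⟩ :=
    exists_isCycle_of_offset (s / m) (s % m) d (Nat.mod_lt _ (NeZero.pos m)) hd hdn
  rw [← add_assoc, Nat.div_add_mod'] at htc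
  rw [Nat.div_add_mod'] at hsc
  have ht : outer g m (s + d) = .inl t := by
    rw [← outer_val t, outer_eq_outer_iff, hdt, Nat.mod_eq_of_lt t.isLt]
  exact ⟨w, c, hc, hcl, outer_val s ▸ hsc, ht ▸ htc⟩

/-- For `g ≥ 1`, `m ≥ 2`, if `x = u_s` and `y = u_t` are vertices of the
outer cycle of `H(g, m)` whose distance along that cycle,
`min |s - t| (2(g+1)m - |s - t|)`, is greater than `m`, then some cycle of `H(g, m)` of
length at most `2m + 4` contains both `x` and `y`. (Here `|s - t|` is expressed in `ℕ` as
`(s - t) + (t - s)` using truncated subtraction.) -/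
theorem stmt14 (g m : ℕ) (hg : 1 ≤ g) (hm : 2 ≤ m)
    (s t : Fin (2 * (g + 1) * m))
    (hfar : m < min (((s : ℕ) - (t : ℕ)) + ((t : ℕ) - (s : ℕ)))
      (2 * (g + 1) * m - ((((s : ℕ) - (t : ℕ)) + ((t : ℕ) - (s : ℕ)))))) :
    ∃ (w : Fin (2 * (g + 1) * m) ⊕ Fin 2) (c : (HGraph g m).Walk w w),
      c.IsCycle ∧ c.length ≤ 2 * m + 4 ∧
        Sum.inl s ∈ c.support ∧ Sum.inl t ∈ c.support :=
  stmt14_general g m s t hfar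
end
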